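/- arXiv:2310.19437 — 5 statements merged into one kernel-verified Lean document; each statement's English description precedes it below -/
import Mathlib

section
/- For all integers n ≥ 2, p ≥ 1, α ≥ 0 and every α-almost supermagic edge labeling t of K_n, the p-robustness satisfies (n − 2p − 19)·p − α ≤ R(p,t,n) ≤ (2n − 4)·p + α (as integers). -/
open Finset

namespace Swap

noncomputable section
open scoped Classical

def eps (n : ℕ) : ℕ := n * (n - 1) / 2

def incEdges (n : ℕ) (v : Fin n) : Finset (Sym2 (Fin n)) :=
  Finset.univ.filter fun e => v ∈ e ∧ ¬ e.IsDiag

def IsEdgeLabeling (n : ℕ) (t : Sym2 (Fin n) → ℕ) : Prop :=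
  Set.BijOn t {e : Sym2 (Fin n) | ¬ e.IsDiag} (Set.Icc 1 (eps n))

def labelSum (n : ℕ) (t : Sym2 (Fin n) → ℕ) (v : Fin n) : ℤ :=
  ∑ e ∈ incEdges n v, (t e : ℤ)

def labelSet (n : ℕ) (t : Sym2 (Fin n) → ℕ) (v : Fin n) : Finset ℕ :=
  (incEdges n v).image t

def AlmostSupermagic (n α : ℕ) (t : Sym2 (Fin n) → ℕ) : Prop :=
  IsEdgeLabeling n t ∧ ∀ u v : Fin n, |labelSum n t u - labelSum n t v| ≤ (α : ℤ)

def IsPSwap (n p : ℕ) (t t' : Sym2 (Fin n) → ℕ) : Prop :=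
  IsEdgeLabeling n t' ∧ ∀ e : Sym2 (Fin n), ¬ e.IsDiag → |(t' e : ℤ) - (t e : ℤ)| ≤ (p : ℤ)

def robustness (n p : ℕ) (t : Sym2 (Fin n) → ℕ) : ℕ :=
  sSup {d : ℕ | ∃ t' : Sym2 (Fin n) → ℕ, IsPSwap n p t t' ∧
    ∃ u v : Fin n, u ≠ v ∧ (d : ℤ) = |labelSum n t' u - labelSum n t' v|}

def Uplus (n p : ℕ) (t : Sym2 (Fin n) → ℕ) (v : Fin n) : Finset (Sym2 (Fin n)) :=
  (incEdges n v).filter fun e => ∃ e' ∈ incEdges n v, t e' = t e + p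

def Uminus (n p : ℕ) (t : Sym2 (Fin n) → ℕ) (v : Fin n) : Finset (Sym2 (Fin n)) :=
  (incEdges n v).filter fun e => ∃ e' ∈ incEdges n v, t e' + p = t e

def badPairsI (n p : ℕ) (t : Sym2 (Fin n) → ℕ) (u v : Fin n) :
    Finset (Sym2 (Sym2 (Fin n))) :=
  Finset.univ.filter fun P => ∃ e₁ e₂ : Sym2 (Fin n), P = s(e₁, e₂) ∧
    ¬ e₁.IsDiag ∧ ¬ e₂.IsDiag ∧ u ∈ e₁ ∧ v ∈ e₂ ∧ ((t e₁ : ℤ) - (t e₂ : ℤ)).natAbs = p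

def badPairsII (n p : ℕ) (t : Sym2 (Fin n) → ℕ) (u v : Fin n) :
    Finset (Sym2 (Sym2 (Fin n))) :=
  Finset.univ.filter fun P => ∃ e₁ e₂ : Sym2 (Fin n), P = s(e₁, e₂) ∧
    ¬ e₁.IsDiag ∧ ¬ e₂.IsDiag ∧ u ∈ e₁ ∧ v ∈ e₂ ∧ ((t e₁ : ℤ) - (t e₂ : ℤ)).natAbs = 2 * p

def badPairs (n p : ℕ) (t : Sym2 (Fin n) → ℕ) (u v : Fin n) :
    Finset (Sym2 (Sym2 (Fin n))) :=
  badPairsI n p t u v ∪ badPairsII n p t u v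

def IsAP1 (I : Finset ℕ) : Prop := ∃ a b : ℕ, a ≤ b ∧ I = Finset.Icc a b

def SetHasType (p m ℓ : ℕ) (S : Finset ℕ) : Prop :=
  ∃ 𝒜 : Finset (Finset ℕ), 𝒜.card ≤ m ∧
    (∀ I ∈ 𝒜, IsAP1 I ∧ I ⊆ S ∧ 2 * p ≤ I.card) ∧
    (𝒜 : Set (Finset ℕ)).PairwiseDisjoint id ∧
    ℓ ≤ ∑ I ∈ 𝒜, I.card

def LabelingHasType (n p m ℓ : ℕ) (t : Sym2 (Fin n) → ℕ) : Prop :=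
  ∀ v : Fin n, SetHasType p m ℓ (labelSet n t v)

def AstrayGood (n b : ℕ) (t : Sym2 (Fin n) → ℕ) : Prop :=
  IsEdgeLabeling n t ∧
  ∃ A : Finset (Sym2 (Fin n)), (∀ e ∈ A, ¬ e.IsDiag) ∧
    A.card % 2 = eps n % 2 ∧
    A.image t = Finset.Icc ((eps n - A.card) / 2 + 1) ((eps n + A.card) / 2) ∧
    ∀ v : Fin n,
      (incEdges n v ∩ A).card ≤ b ∧
      ((incEdges n v).filter fun e => t e ≤ (eps n - A.card) / 2).card
        = ((incEdges n v).filter fun e => (eps n + A.card) / 2 < t e).card ∧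
      2 * ∑ e ∈ incEdges n v \ A, t e = (incEdges n v \ A).card * (eps n + 1)

def Admissible (p : ℕ → ℕ) : Prop :=
  Filter.Tendsto (fun n => (p n : ℝ) / n) Filter.atTop (nhds 0) ∧
  Filter.Tendsto p Filter.atTop Filter.atTop

end
end Swap

/-!
Upper bound: a `p`-swap changes each of the `n - 2` labels at `u` other than that of `uv` by at
most `p`, likewise at `v`, and the change of the label of `uv` cancels in the difference.

Lower bound: for vertices `u ≠ v`, exchange labels in disjoint pairs `(b, b + p)` so that many
labels at `u` go up by `p` and many labels at `v` go down by `p`, while no label at `u` goes down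
and none at `v` goes up. Every label qualifies except the label of `uv`, the `p` labels nearest to
an end of `[1, ε]`, and the colliding ones: a label at `u` (or `v`) with another label of the same
vertex `p` above (or below) it, and a label at `v` lying `2p` above a label at `u`. Two labels lie
on at most one common vertex and one label on exactly two, so double counting lets us choose `u`,
then `v`, with at most `n + 1` collisions; about `2n - 2p` labels then move, each gaining `p` on
top of a difference of at least `-α`.
-/

theorem Finset.exists_card_mul_le_sum {ι : Type*} {s : Finset ι} (hs : s.Nonempty)
    (f : ι → ℕ) :
    ∃ i ∈ s, #s * f i ≤ ∑ j ∈ s, f j := by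
  obtain ⟨i, hi, hmin⟩ := s.exists_min_image f hs
  exact ⟨i, hi, by simpa using s.card_nsmul_le_sum f (f i) hmin⟩

theorem Finset.sum_card_filter_le_card_mul {ι α : Type*} (s : Finset ι) (t : Finset α)
    (r : ι → α → Prop) [∀ i a, Decidable (r i a)] {k : ℕ}
    (h : ∀ b ∈ t, #{a ∈ s | r a b} ≤ k) :
    ∑ a ∈ s, #{b ∈ t | r a b} ≤ #t * k := by
  calc ∑ a ∈ s, #(t.bipartiteAbove r a) = ∑ b ∈ t, #(s.bipartiteBelow r b) :=
        sum_card_bipartiteAbove_eq_sum_card_bipartiteBelow r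
    _ ≤ #t • k := t.sum_le_card_nsmul _ _ h

theorem Nat.cast_sSup_le {S : Set ℕ} {b : ℤ} (hb : 0 ≤ b) (h : ∀ d ∈ S, (d : ℤ) ≤ b) :
    ((sSup S : ℕ) : ℤ) ≤ b := by
  lift b to ℕ using hb
  exact_mod_cast csSup_le' fun d hd => by exact_mod_cast h d hd

theorem Nat.cast_le_sSup {S : Set ℕ} {b : ℤ} (h : ∀ d ∈ S, (d : ℤ) ≤ b) {d : ℕ}
    (hd : d ∈ S) :
    (d : ℤ) ≤ ((sSup S : ℕ) : ℤ) :=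
  Nat.cast_le.2 <| le_csSup ⟨b.toNat, fun d' hd' => by have := h d' hd'; omega⟩ hd

namespace Swap

section ShiftSwap

variable {B : Finset ℕ} {p : ℕ}

/-- When `B` and `B + p` are disjoint, the product of the transpositions `(b, b + p)`, `b ∈ B`. -/
def shiftSwap (B : Finset ℕ) (p z : ℕ) : ℕ :=
  if z ∈ B then z + p else if z ∈ B.image (· + p) then z - p else z

theorem shiftSwap_of_mem {z : ℕ} (hz : z ∈ B) : shiftSwap B p z = z + p := if_pos hz

theorem shiftSwap_add_of_mem (hB : Disjoint B (B.image (· + p))) {b : ℕ} (hb : b ∈ B) :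
    shiftSwap B p (b + p) = b := by
  have h : b + p ∈ B.image (· + p) := mem_image_of_mem _ hb
  rw [shiftSwap, if_neg (disjoint_right.1 hB h), if_pos h, Nat.add_sub_cancel]

theorem shiftSwap_of_not_mem {z : ℕ} (h₁ : z ∉ B) (h₂ : z ∉ B.image (· + p)) :
    shiftSwap B p z = z := by
  rw [shiftSwap, if_neg h₁, if_neg h₂]

theorem shiftSwap_involutive (hB : Disjoint B (B.image (· + p))) :
    Function.Involutive (shiftSwap B p) := by
  intro z
  by_cases h₁ : z ∈ B
  · rw [shiftSwap_of_mem h₁, shiftSwap_add_of_mem hB h₁]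
  by_cases h₂ : z ∈ B.image (· + p)
  · obtain ⟨b, hb, rfl⟩ := mem_image.1 h₂
    rw [shiftSwap_add_of_mem hB hb, shiftSwap_of_mem hb]
  · rw [shiftSwap_of_not_mem h₁ h₂, shiftSwap_of_not_mem h₁ h₂]

theorem shiftSwap_mapsTo {a c : ℕ} (h : ∀ b ∈ B, a ≤ b ∧ b + p ≤ c) :
    Set.MapsTo (shiftSwap B p) (Set.Icc a c) (Set.Icc a c) := by
  intro z hz
  unfold shiftSwap
  split_ifs with h₁ h₂
  · have := h z h₁
    simp only [Set.mem_Icc] at hz ⊢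
    omega
  · obtain ⟨b, hb, rfl⟩ := mem_image.1 h₂
    have := h b hb
    simp only [Set.mem_Icc]
    omega
  · exact hz

theorem shiftSwap_bijOn {a c : ℕ} (hB : Disjoint B (B.image (· + p)))
    (h : ∀ b ∈ B, a ≤ b ∧ b + p ≤ c) :
    Set.BijOn (shiftSwap B p) (Set.Icc a c) (Set.Icc a c) :=
  Set.InvOn.bijOn ⟨fun z _ => shiftSwap_involutive hB z, fun z _ => shiftSwap_involutive hB z⟩
    (shiftSwap_mapsTo h) (shiftSwap_mapsTo h)

theorem natCast_shiftSwap (hB : Disjoint B (B.image (· + p))) (z : ℕ) :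
    (shiftSwap B p z : ℤ) =
      z + p * ((if z ∈ B then 1 else 0) - (if z ∈ B.image (· + p) then 1 else 0)) := by
  by_cases h₁ : z ∈ B
  · rw [shiftSwap_of_mem h₁, if_pos h₁, if_neg (disjoint_left.1 hB h₁)]
    push_cast
    ring
  by_cases h₂ : z ∈ B.image (· + p)
  · obtain ⟨b, hb, rfl⟩ := mem_image.1 h₂
    rw [shiftSwap_add_of_mem hB hb, if_neg h₁, if_pos h₂]
    push_cast
    ring
  · rw [shiftSwap_of_not_mem h₁ h₂, if_neg h₁, if_neg h₂]
    ring

theorem abs_shiftSwap_sub_le (hB : Disjoint B (B.image (· + p))) (z : ℕ) :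
    |(shiftSwap B p z : ℤ) - z| ≤ p := by
  rw [natCast_shiftSwap hB, add_sub_cancel_left, abs_mul, Nat.abs_cast]
  refine mul_le_of_le_one_right (Nat.cast_nonneg p) ?_
  split_ifs <;> simp

theorem sum_shiftSwap (hB : Disjoint B (B.image (· + p))) (S : Finset ℕ) :
    ∑ x ∈ S, (shiftSwap B p x : ℤ) =
      ∑ x ∈ S, (x : ℤ) + p * ((#(S ∩ B) : ℤ) - #(S ∩ B.image (· + p))) := by
  simp only [natCast_shiftSwap hB, sum_add_distrib, ← mul_sum, sum_sub_distrib, sum_boole,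
    filter_mem_eq_inter]

end ShiftSwap

section SwapBase

def shiftPairs (S : Finset ℕ) (p : ℕ) : Finset ℕ := {x ∈ S | x + p ∈ S}

variable (Su Sv : Finset ℕ) (c p ε : ℕ)

def raisedLabels : Finset ℕ := Su \ ({c} ∪ Ioc (ε - p) ε ∪ shiftPairs Su p)

def loweredLabels : Finset ℕ :=
  Sv \ ({c} ∪ Icc 1 p ∪ (shiftPairs Sv p).image (· + p) ∪ Su.image (· + 2 * p))

def swapBase : Finset ℕ := raisedLabels Su c p ε ∪ (loweredLabels Su Sv c p).image (· - p)

variable {Su Sv c p ε}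

theorem mem_raisedLabels {x : ℕ} :
    x ∈ raisedLabels Su c p ε ↔
      x ∈ Su ∧ x ≠ c ∧ ¬(ε - p < x ∧ x ≤ ε) ∧ x + p ∉ Su := by
  simp [raisedLabels, shiftPairs]
  tauto

theorem mem_loweredLabels {y : ℕ} :
    y ∈ loweredLabels Su Sv c p ↔ y ∈ Sv ∧ y ≠ c ∧ ¬(1 ≤ y ∧ y ≤ p) ∧
      (∀ x ∈ Sv, x + p ∈ Sv → x + p ≠ y) ∧ ∀ x ∈ Su, x + 2 * p ≠ y := by
  simp [loweredLabels, shiftPairs]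

theorem lt_of_mem_loweredLabels (hSv : Sv ⊆ Icc 1 ε) {y : ℕ}
    (hy : y ∈ loweredLabels Su Sv c p) : p < y := by
  obtain ⟨hyv, -, hyp, -⟩ := mem_loweredLabels.1 hy
  have := mem_Icc.1 (hSv hyv)
  omega

theorem loweredLabels_subset_image_swapBase (hSv : Sv ⊆ Icc 1 ε) :
    loweredLabels Su Sv c p ⊆ (swapBase Su Sv c p ε).image (· + p) := fun y hy =>
  mem_image.2 ⟨y - p, mem_union_right _ (mem_image_of_mem _ hy),
    Nat.sub_add_cancel (lt_of_mem_loweredLabels hSv hy).le⟩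

theorem swapBase_bounds (hSu : Su ⊆ Icc 1 ε) (hSv : Sv ⊆ Icc 1 ε) :
    ∀ b ∈ swapBase Su Sv c p ε, 1 ≤ b ∧ b + p ≤ ε := by
  intro b hb
  rcases mem_union.1 hb with hb | hb
  · obtain ⟨hbu, -, hbε, -⟩ := mem_raisedLabels.1 hb
    have := mem_Icc.1 (hSu hbu)
    omega
  · obtain ⟨y, hy, rfl⟩ := mem_image.1 hb
    have := mem_Icc.1 (hSv (mem_loweredLabels.1 hy).1)
    have := lt_of_mem_loweredLabels hSv hy
    omega

theorem card_le_card_raisedLabels :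
    #Su ≤ #(raisedLabels Su c p ε) + 1 + p + #(shiftPairs Su p) := by
  rw [← card_sdiff_add_card_inter Su ({c} ∪ Ioc (ε - p) ε ∪ shiftPairs Su p)]
  grw [inter_subset_right, card_union_le, card_union_le, card_singleton, Nat.card_Ioc]
  unfold raisedLabels
  omega

theorem card_le_card_loweredLabels :
    #Sv ≤ #(loweredLabels Su Sv c p) + 1 + p + #(shiftPairs Sv p) +
      #(Su.image (· + 2 * p) ∩ Sv) := by
  have hX :
      #({c} ∪ Icc 1 p ∪ (shiftPairs Sv p).image (· + p)) ≤ 1 + p + #(shiftPairs Sv p) := by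
    grw [card_union_le, card_union_le, card_singleton, Nat.card_Icc, card_image_le]
    omega
  rw [← card_sdiff_add_card_inter Sv
    ({c} ∪ Icc 1 p ∪ (shiftPairs Sv p).image (· + p) ∪ Su.image (· + 2 * p)),
    inter_union_distrib_left, inter_comm Sv (Su.image _)]
  grw [card_union_le, inter_subset_right, hX]
  unfold loweredLabels
  omega

theorem card_add_card_le_card_inter_swapBase (hSv : Sv ⊆ Icc 1 ε) :
    #Su + #Sv ≤
      #(Su ∩ swapBase Su Sv c p ε) + #(Sv ∩ (swapBase Su Sv c p ε).image (· + p)) +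
      2 * (p + 1) + #(shiftPairs Su p) + #(shiftPairs Sv p) + #(Su.image (· + 2 * p) ∩ Sv) := by
  have hraised : #(raisedLabels Su c p ε) ≤ #(Su ∩ swapBase Su Sv c p ε) :=
    card_le_card (subset_inter sdiff_subset subset_union_left)
  have hlowered : #(loweredLabels Su Sv c p) ≤ #(Sv ∩ (swapBase Su Sv c p ε).image (· + p)) :=
    card_le_card (subset_inter sdiff_subset (loweredLabels_subset_image_swapBase hSv))
  have hu := card_le_card_raisedLabels (Su := Su) (c := c) (p := p) (ε := ε)
  have hv := card_le_card_loweredLabels (Su := Su) (Sv := Sv) (c := c) (p := p)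
  omega

variable (hSv : Sv ⊆ Icc 1 ε) (hc : ∀ x ∈ Su, x ∈ Sv → x = c)
include hSv hc

theorem disjoint_swapBase_image :
    Disjoint (swapBase Su Sv c p ε) ((swapBase Su Sv c p ε).image (· + p)) := by
  rw [disjoint_right]
  intro _ himg hbp
  obtain ⟨b, hb, rfl⟩ := mem_image.1 himg
  rcases mem_union.1 hb with hb | hb <;> rcases mem_union.1 hbp with hbp | hbp
  · exact (mem_raisedLabels.1 hb).2.2.2 (mem_raisedLabels.1 hbp).1
  · obtain ⟨y, hy, hyb⟩ := mem_image.1 hbp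
    have := lt_of_mem_loweredLabels hSv hy
    exact (mem_loweredLabels.1 hy).2.2.2.2 b (mem_raisedLabels.1 hb).1 (by omega)
  · obtain ⟨y, hy, rfl⟩ := mem_image.1 hb
    have := lt_of_mem_loweredLabels hSv hy
    rw [Nat.sub_add_cancel this.le] at hbp
    obtain ⟨hyu, hyc, -⟩ := mem_raisedLabels.1 hbp
    exact hyc (hc y hyu (mem_loweredLabels.1 hy).1)
  · obtain ⟨y, hy, rfl⟩ := mem_image.1 hb
    obtain ⟨z, hz, hzy⟩ := mem_image.1 hbp
    have hyp := lt_of_mem_loweredLabels hSv hy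
    have hzp := lt_of_mem_loweredLabels hSv hz
    rw [Nat.sub_add_cancel hyp.le] at hzy
    exact (mem_loweredLabels.1 hz).2.2.2.1 y (mem_loweredLabels.1 hy).1
      (by rw [← hzy, Nat.sub_add_cancel hzp.le]; exact (mem_loweredLabels.1 hz).1) (by omega)

theorem disjoint_left_image_swapBase : Disjoint Su ((swapBase Su Sv c p ε).image (· + p)) := by
  rw [disjoint_left]
  intro _ hx himg
  obtain ⟨b, hb, rfl⟩ := mem_image.1 himg
  rcases mem_union.1 hb with hb | hb
  · exact (mem_raisedLabels.1 hb).2.2.2 hx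
  · obtain ⟨y, hy, rfl⟩ := mem_image.1 hb
    rw [Nat.sub_add_cancel (lt_of_mem_loweredLabels hSv hy).le] at hx
    obtain ⟨hyv, hyc, -⟩ := mem_loweredLabels.1 hy
    exact hyc (hc y hx hyv)

theorem disjoint_right_swapBase : Disjoint Sv (swapBase Su Sv c p ε) := by
  rw [disjoint_left]
  intro x hx hb
  rcases mem_union.1 hb with hb | hb
  · obtain ⟨hxu, hxc, -⟩ := mem_raisedLabels.1 hb
    exact hxc (hc x hxu hx)
  · obtain ⟨y, hy, rfl⟩ := mem_image.1 hb
    have := lt_of_mem_loweredLabels hSv hy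
    obtain ⟨hyv, -, -, hy', -⟩ := mem_loweredLabels.1 hy
    exact hy' (y - p) hx (by rwa [Nat.sub_add_cancel this.le]) (Nat.sub_add_cancel this.le)

end SwapBase

variable {n p α : ℕ} {t t' : Sym2 (Fin n) → ℕ} {u v : Fin n}

theorem mem_incEdges {v : Fin n} {e : Sym2 (Fin n)} :
    e ∈ incEdges n v ↔ v ∈ e ∧ ¬e.IsDiag := by
  simp [incEdges]

theorem incEdges_eq_incidenceFinset (v : Fin n) :
    incEdges n v = (⊤ : SimpleGraph (Fin n)).incidenceFinset v := by
  ext e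
  simp [mem_incEdges, SimpleGraph.incidenceSet, and_comm]

theorem card_incEdges (v : Fin n) : #(incEdges n v) = n - 1 := by
  rw [incEdges_eq_incidenceFinset, SimpleGraph.card_incidenceFinset_eq_degree,
    SimpleGraph.complete_graph_degree, Fintype.card_fin]

theorem mk_mem_incEdges_left {u v : Fin n} (huv : u ≠ v) : s(u, v) ∈ incEdges n u :=
  mem_incEdges.2 ⟨Sym2.mem_mk_left u v, Sym2.mk_isDiag_iff.not.2 huv⟩

theorem mk_mem_incEdges_right {u v : Fin n} (huv : u ≠ v) : s(u, v) ∈ incEdges n v :=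
  mem_incEdges.2 ⟨Sym2.mem_mk_right u v, Sym2.mk_isDiag_iff.not.2 huv⟩

def crowding (n p : ℕ) (t : Sym2 (Fin n) → ℕ) (u v : Fin n) : ℕ :=
  #(shiftPairs (labelSet n t u) p) + #(shiftPairs (labelSet n t v) p) +
    #((labelSet n t u).image (· + 2 * p) ∩ labelSet n t v)

namespace IsEdgeLabeling

variable (hL : IsEdgeLabeling n t)
include hL

theorem injOn_incEdges (v : Fin n) : Set.InjOn t (incEdges n v) :=
  hL.injOn.mono fun _ he => (mem_incEdges.1 he).2

theorem labelSet_subset_Icc (v : Fin n) : labelSet n t v ⊆ Icc 1 (eps n) := by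
  intro x hx
  obtain ⟨e, he, rfl⟩ := mem_image.1 hx
  simpa using hL.mapsTo (mem_incEdges.1 he).2

theorem card_labelSet (v : Fin n) : #(labelSet n t v) = n - 1 := by
  rw [labelSet, card_image_of_injOn (hL.injOn_incEdges v), card_incEdges]

theorem eq_of_mem_labelSet {a b : Fin n} (hab : a ≠ b) {x : ℕ} (ha : x ∈ labelSet n t a)
    (hb : x ∈ labelSet n t b) : x = t s(a, b) := by
  obtain ⟨e, he, rfl⟩ := mem_image.1 ha
  obtain ⟨f, hf, hfe⟩ := mem_image.1 hb
  have hef : f = e := hL.injOn (mem_incEdges.1 hf).2 (mem_incEdges.1 he).2 hfe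
  rw [(Sym2.mem_and_mem_iff hab).1 ⟨(mem_incEdges.1 he).1, hef ▸ (mem_incEdges.1 hf).1⟩]

theorem card_filter_mem_labelSet_le_two (y : ℕ) : #{w | y ∈ labelSet n t w} ≤ 2 := by
  by_contra! h
  obtain ⟨a, ha, b, hb, c, hc, hab, hac, hbc⟩ := two_lt_card.1 h
  simp only [mem_filter, mem_univ, true_and] at ha hb hc
  have h₁ := hL.eq_of_mem_labelSet hab ha hb
  have h₂ := hL.eq_of_mem_labelSet hac ha hc
  exact hbc <| Sym2.congr_right.1 <|
    hL.injOn (Sym2.mk_isDiag_iff.not.2 hab) (Sym2.mk_isDiag_iff.not.2 hac) (h₁.symm.trans h₂)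

theorem sum_card_shiftPairs_le (hp : p ≠ 0) :
    ∑ w, #(shiftPairs (labelSet n t w) p) ≤ eps n := by
  have hpairs (w : Fin n) : shiftPairs (labelSet n t w) p =
      {x ∈ Icc 1 (eps n) | x ∈ labelSet n t w ∧ x + p ∈ labelSet n t w} := by
    ext x
    simp only [shiftPairs, mem_filter]
    exact ⟨fun h => ⟨hL.labelSet_subset_Icc w h.1, h⟩, fun h => h.2⟩
  simp only [hpairs]
  refine (sum_card_filter_le_card_mul _ _ _ fun x _ => card_le_one.2 ?_).trans (by simp [eps])
  intro a ha b hb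
  simp only [mem_filter, mem_univ, true_and] at ha hb
  by_contra hab
  have h₁ := hL.eq_of_mem_labelSet hab ha.1 hb.1
  have h₂ := hL.eq_of_mem_labelSet hab ha.2 hb.2
  omega

theorem sum_card_inter_labelSet_le (T : Finset ℕ) :
    ∑ w, #(T ∩ labelSet n t w) ≤ #T * 2 := by
  simp only [← filter_mem_eq_inter]
  exact sum_card_filter_le_card_mul _ _ _ fun y _ => hL.card_filter_mem_labelSet_le_two y

theorem labelSum_comp (f : ℕ → ℕ) (v : Fin n) :
    labelSum n (f ∘ t) v = ∑ x ∈ labelSet n t v, (f x : ℤ) := by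
  rw [labelSet, sum_image (hL.injOn_incEdges v)]
  rfl

theorem labelSum_shiftSwap_comp {B : Finset ℕ} (hB : Disjoint B (B.image (· + p))) (v : Fin n) :
    labelSum n (shiftSwap B p ∘ t) v = labelSum n t v +
      p * ((#(labelSet n t v ∩ B) : ℤ) - #(labelSet n t v ∩ B.image (· + p))) := by
  rw [hL.labelSum_comp, sum_shiftSwap hB]
  exact congrArg (· + _) (hL.labelSum_comp id v).symm

theorem isPSwap_shiftSwap_comp {B : Finset ℕ} (hB : Disjoint B (B.image (· + p)))
    (hbounds : ∀ b ∈ B, 1 ≤ b ∧ b + p ≤ eps n) : IsPSwap n p t (shiftSwap B p ∘ t) :=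
  ⟨(shiftSwap_bijOn hB hbounds).comp hL, fun e _ => abs_shiftSwap_sub_le hB (t e)⟩

theorem labelSum_shiftSwap_comp_sub {B : Finset ℕ} (hB : Disjoint B (B.image (· + p)))
    (hu : Disjoint (labelSet n t u) (B.image (· + p))) (hv : Disjoint (labelSet n t v) B) :
    labelSum n (shiftSwap B p ∘ t) u - labelSum n (shiftSwap B p ∘ t) v =
      labelSum n t u - labelSum n t v +
        p * ((#(labelSet n t u ∩ B) : ℤ) + #(labelSet n t v ∩ B.image (· + p))) := by
  rw [hL.labelSum_shiftSwap_comp hB, hL.labelSum_shiftSwap_comp hB,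
    disjoint_iff_inter_eq_empty.1 hu, disjoint_iff_inter_eq_empty.1 hv, card_empty, Nat.cast_zero]
  ring

theorem exists_isPSwap_gain (huv : u ≠ v) :
    ∃ t', IsPSwap n p t t' ∧
      labelSum n t u - labelSum n t v + p * (2 * n - 4 - 2 * p - crowding n p t u v : ℤ) ≤
        labelSum n t' u - labelSum n t' v := by
  have hSu := hL.labelSet_subset_Icc u
  have hSv := hL.labelSet_subset_Icc v
  have hc : ∀ x ∈ labelSet n t u, x ∈ labelSet n t v → x = t s(u, v) := fun x hxu hxv =>
    hL.eq_of_mem_labelSet huv hxu hxv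
  have hB : Disjoint (swapBase (labelSet n t u) (labelSet n t v) (t s(u, v)) p (eps n)) _ :=
    disjoint_swapBase_image hSv hc
  refine ⟨_, hL.isPSwap_shiftSwap_comp hB (swapBase_bounds hSu hSv), ?_⟩
  rw [hL.labelSum_shiftSwap_comp_sub hB (disjoint_left_image_swapBase hSv hc)
    (disjoint_right_swapBase hSv hc)]
  have hcard := card_add_card_le_card_inter_swapBase (Su := labelSet n t u) (c := t s(u, v))
    (p := p) hSv
  rw [hL.card_labelSet, hL.card_labelSet] at hcard
  gcongr
  have := u.pos
  unfold crowding
  omega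

theorem exists_crowding_le (hn : 2 ≤ n) (hp : p ≠ 0) :
    ∃ u v, u ≠ v ∧ crowding n p t u v ≤ n + 1 := by
  obtain ⟨u, -, hu⟩ := exists_card_mul_le_sum ⟨⟨0, by omega⟩, mem_univ _⟩
    fun w => #(shiftPairs (labelSet n t w) p)
  have hne : (univ.erase u).Nonempty := by
    rw [← card_pos, card_erase_of_mem (mem_univ _), card_univ, Fintype.card_fin]
    omega
  obtain ⟨v, hv, hv'⟩ := exists_card_mul_le_sum hne
    fun w => #(shiftPairs (labelSet n t w) p) +
      #((labelSet n t u).image (· + 2 * p) ∩ labelSet n t w)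
  refine ⟨u, v, (ne_of_mem_erase hv).symm, ?_⟩
  have hshift := hL.sum_card_shiftPairs_le hp
  have hinter := hL.sum_card_inter_labelSet_le ((labelSet n t u).image (· + 2 * p))
  grw [card_image_le, hL.card_labelSet] at hinter
  grw [sum_add_distrib, sum_le_sum_of_subset (erase_subset u univ), hshift,
    sum_le_sum_of_subset (erase_subset u univ), hinter] at hv'
  rw [card_univ, Fintype.card_fin] at hu
  rw [card_erase_of_mem (mem_univ _), card_univ, Fintype.card_fin] at hv'
  have heps : 2 * eps n ≤ n * (n - 1) := by
    unfold eps
    omega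
  obtain ⟨m, rfl⟩ : ∃ m, n = m + 2 := ⟨n - 2, by omega⟩
  rw [show m + 2 - 1 = m + 1 by omega] at hv' heps
  have h₁ : 2 * #(shiftPairs (labelSet _ t u) p) ≤ m + 1 := by nlinarith
  have h₂ : 2 * (#(shiftPairs (labelSet _ t v) p) +
      #((labelSet _ t u).image (· + 2 * p) ∩ labelSet _ t v)) ≤ m + 6 := by nlinarith
  unfold crowding
  omega

end IsEdgeLabeling

theorem abs_labelSum_sub_sub_le
    (hclose : ∀ e : Sym2 (Fin n), ¬e.IsDiag → |(t' e : ℤ) - t e| ≤ p) (huv : u ≠ v) :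
    |(labelSum n t' u - labelSum n t' v) - (labelSum n t u - labelSum n t v)| ≤
      (2 * n - 4) * p := by
  have hn : 2 ≤ n := by
    have := Fin.val_ne_of_ne huv
    omega
  have hsplit {w : Fin n} (hw : s(u, v) ∈ incEdges n w) : labelSum n t' w - labelSum n t w =
      ((t' s(u, v) : ℤ) - t s(u, v)) +
        ∑ e ∈ (incEdges n w).erase s(u, v), ((t' e : ℤ) - t e) := by
    rw [labelSum, labelSum, ← sum_sub_distrib]
    exact (add_sum_erase _ (fun e => (t' e : ℤ) - t e) hw).symm
  have hbound {w : Fin n} (hw : s(u, v) ∈ incEdges n w) :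
      |∑ e ∈ (incEdges n w).erase s(u, v), ((t' e : ℤ) - t e)| ≤ (n - 2) * p := by
    grw [abs_sum_le_sum_abs]
    refine (sum_le_card_nsmul _ _ (p : ℤ) fun e he =>
      hclose e (mem_incEdges.1 (mem_of_mem_erase he)).2).trans_eq ?_
    rw [card_erase_of_mem hw, card_incEdges, nsmul_eq_mul, Nat.cast_sub (by omega),
      Nat.cast_sub (by omega)]
    ring
  have hu := hsplit (mk_mem_incEdges_left huv)
  have hv := hsplit (mk_mem_incEdges_right huv)
  have := abs_sub (∑ e ∈ (incEdges n u).erase s(u, v), ((t' e : ℤ) - t e))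
    (∑ e ∈ (incEdges n v).erase s(u, v), ((t' e : ℤ) - t e))
  calc _ = |∑ e ∈ (incEdges n u).erase s(u, v), ((t' e : ℤ) - t e) -
        ∑ e ∈ (incEdges n v).erase s(u, v), ((t' e : ℤ) - t e)| := by congr 1; linarith
    _ ≤ _ := by linarith [hbound (mk_mem_incEdges_left huv), hbound (mk_mem_incEdges_right huv)]

theorem abs_labelSum_sub_le (ht : AlmostSupermagic n α t) (hps : IsPSwap n p t t')
    (huv : u ≠ v) : |labelSum n t' u - labelSum n t' v| ≤ (2 * n - 4) * p + α := by
  have := abs_labelSum_sub_sub_le hps.2 huv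
  have := abs_sub_abs_le_abs_sub (labelSum n t' u - labelSum n t' v)
    (labelSum n t u - labelSum n t v)
  linarith [ht.2 u v]

theorem robustness_le (hn : 2 ≤ n) (ht : AlmostSupermagic n α t) :
    (robustness n p t : ℤ) ≤ (2 * n - 4) * p + α := by
  refine Nat.cast_sSup_le (by nlinarith) ?_
  rintro d ⟨t', hps, u, v, huv, hd⟩
  exact hd ▸ abs_labelSum_sub_le ht hps huv

theorem abs_labelSum_sub_le_robustness (ht : AlmostSupermagic n α t) (hps : IsPSwap n p t t')
    (huv : u ≠ v) : |labelSum n t' u - labelSum n t' v| ≤ robustness n p t := by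
  rw [← Int.natCast_natAbs]
  refine Nat.cast_le_sSup (b := (2 * n - 4) * p + α) ?_
    ⟨t', hps, u, v, huv, Int.natCast_natAbs _⟩
  rintro d ⟨t', hps, u, v, huv, hd⟩
  exact hd ▸ abs_labelSum_sub_le ht hps huv

end Swap

theorem stmt0 (n p α : ℕ) (hn : 2 ≤ n) (hp : 1 ≤ p)
    (t : Sym2 (Fin n) → ℕ) (ht : Swap.AlmostSupermagic n α t) :
    ((n : ℤ) - 2 * p - 19) * p - α ≤ (Swap.robustness n p t : ℤ) ∧
      (Swap.robustness n p t : ℤ) ≤ (2 * n - 4) * p + α := by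
  refine ⟨?_, Swap.robustness_le hn ht⟩
  obtain ⟨u, v, huv, hcrowd⟩ := ht.1.exists_crowding_le hn (by omega : p ≠ 0)
  obtain ⟨t', hps, hgain⟩ := ht.1.exists_isPSwap_gain (p := p) huv
  have hR := Swap.abs_labelSum_sub_le_robustness ht hps huv
  have hα := (abs_le.1 (ht.2 u v)).1
  have hcoef :
      ((n : ℤ) - 2 * p - 19) * p ≤ p * (2 * n - 4 - 2 * p - Swap.crowding n p t u v) := by
    rw [mul_comm]
    exact mul_le_mul_of_nonneg_left (by omega) (Nat.cast_nonneg p)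
  linarith [le_abs_self (Swap.labelSum n t' u - Swap.labelSum n t' v)]
end

section
/- Let t be an edge labeling of K_n (n ≥ 2), let p ≥ 1 and ℓ ≥ 0 be integers, and suppose there exist distinct vertices u and v such that |U_+(t,u)| + |U_−(t,v)| + 2|B({u,v})| ≤ ℓ. Then there exists a p-swap t′ of t such that |s(t′,u) − s(t′,v)| ≥ p·(2n − 2p − 4 − ℓ) − |s(t,u) − s(t,v)|. -/
open Finset

lemma aux_mem_inc {n : ℕ} {v : Fin n} {e : Sym2 (Fin n)} :
    e ∈ Swap.incEdges n v ↔ v ∈ e ∧ ¬ e.IsDiag := by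
  classical
  simp [Swap.incEdges]

lemma aux_inc_card (n : ℕ) (v : Fin n) : (Swap.incEdges n v).card = n - 1 := by
  classical
  rw [show Swap.incEdges n v = (Finset.univ.erase v).image (fun w => s(v, w)) from ?_]
  · rw [Finset.card_image_of_injOn, Finset.card_erase_of_mem (Finset.mem_univ v), Finset.card_univ, Fintype.card_fin]
    intro a ha b hb hab
    simp only [Finset.coe_erase, Set.mem_diff, Set.mem_singleton_iff, Finset.coe_univ, Set.mem_univ, true_and] at ha hb
    simp only [Sym2.eq, Sym2.rel_iff', Prod.mk.injEq, Prod.swap_prod_mk] at hab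
    rcases hab with ⟨-, h⟩ | ⟨h1, h2⟩
    · exact h
    · exact absurd h2 ha
  · ext e
    induction e using Sym2.inductionOn with
    | hf a b =>
      simp only [Swap.incEdges, Finset.mem_filter, Finset.mem_univ, true_and, Sym2.mem_iff, Sym2.isDiag_iff_proj_eq, Finset.mem_image, Finset.mem_erase, Sym2.eq, Sym2.rel_iff', Prod.mk.injEq, Prod.swap_prod_mk, and_true]
      constructor
      · rintro ⟨hv, hd⟩
        rcases hv with rfl | rfl
        · exact ⟨b, fun hh => hd hh.symm, Or.inl ⟨rfl, rfl⟩⟩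
        · exact ⟨a, fun hh => hd hh, Or.inr ⟨rfl, rfl⟩⟩
      · rintro ⟨w, hw, ⟨rfl, rfl⟩ | ⟨rfl, rfl⟩⟩
        · exact ⟨Or.inl rfl, fun hh => hw hh.symm⟩
        · exact ⟨Or.inr rfl, fun hh => hw hh⟩

lemma aux_common {n : ℕ} {u v : Fin n} (huv : u ≠ v) {e : Sym2 (Fin n)}
    (heu : e ∈ Swap.incEdges n u) (hev : e ∈ Swap.incEdges n v) : e = s(u, v) := by
  classical
  obtain ⟨hu, hd⟩ := aux_mem_inc.mp heu
  obtain ⟨hv, -⟩ := aux_mem_inc.mp hev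
  induction e using Sym2.inductionOn with
  | hf a b =>
    rw [Sym2.mem_iff] at hu hv
    rw [Sym2.isDiag_iff_proj_eq] at hd
    rcases hu with rfl | rfl
    · rcases hv with rfl | rfl
      · exact absurd rfl huv
      · rfl
    · rcases hv with rfl | rfl
      · exact Sym2.eq_swap
      · exact absurd rfl huv

theorem stmt1 (n p ℓ : ℕ) (hn : 2 ≤ n) (hp : 1 ≤ p)
    (t : Sym2 (Fin n) → ℕ) (ht : Swap.IsEdgeLabeling n t)
    (u v : Fin n) (huv : u ≠ v)
    (h : (Swap.Uplus n p t u).card + (Swap.Uminus n p t v).card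
        + 2 * (Swap.badPairs n p t u v).card ≤ ℓ) :
    ∃ t' : Sym2 (Fin n) → ℕ, Swap.IsPSwap n p t t' ∧
      (p : ℤ) * (2 * n - 2 * p - 4 - ℓ) - |Swap.labelSum n t u - Swap.labelSum n t v|
        ≤ |Swap.labelSum n t' u - Swap.labelSum n t' v| := by
  classical
  set ε := Swap.eps n with hε
  have htm : ∀ e : Sym2 (Fin n), ¬ e.IsDiag → t e ∈ Set.Icc 1 ε := fun e he => ht.1 he
  have hti : Set.InjOn t {e : Sym2 (Fin n) | ¬ e.IsDiag} := ht.2.1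
  set Du := Swap.incEdges n u with hDu
  set Dv := Swap.incEdges n v with hDv
  have hDu_nd : ∀ e ∈ Du, ¬ e.IsDiag := fun e he => (aux_mem_inc.mp he).2
  have hDv_nd : ∀ e ∈ Dv, ¬ e.IsDiag := fun e he => (aux_mem_inc.mp he).2
  set Su := Du.image t with hSu
  set Sv := Dv.image t with hSv
  have hSu_card : Su.card = n - 1 := by
    rw [hSu, Finset.card_image_of_injOn (fun a ha b hb => hti (hDu_nd a ha) (hDu_nd b hb)), hDu, aux_inc_card]
  have hSv_card : Sv.card = n - 1 := by
    rw [hSv, Finset.card_image_of_injOn (fun a ha b hb => hti (hDv_nd a ha) (hDv_nd b hb)), hDv, aux_inc_card]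
  have hSub : ∀ x ∈ Su, 1 ≤ x ∧ x ≤ ε := by
    intro x hx
    obtain ⟨e, he, rfl⟩ := Finset.mem_image.mp hx
    exact htm e (hDu_nd e he)
  have hSvb : ∀ y ∈ Sv, 1 ≤ y ∧ y ≤ ε := by
    intro y hy
    obtain ⟨e, he, rfl⟩ := Finset.mem_image.mp hy
    exact htm e (hDv_nd e he)
  set euv : Sym2 (Fin n) := s(u, v) with heuv
  have heuv_u : euv ∈ Du := aux_mem_inc.mpr ⟨by simp [heuv], by simp [heuv, Sym2.isDiag_iff_proj_eq, huv]⟩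
  have heuv_v : euv ∈ Dv := aux_mem_inc.mpr ⟨by simp [heuv], by simp [heuv, Sym2.isDiag_iff_proj_eq, huv]⟩
  -- labels shared between Su and Sv must be the label of euv
  have hshared : ∀ x, x ∈ Su → x ∈ Sv → x = t euv := by
    intro x hxu hxv
    obtain ⟨e1, he1, rfl⟩ := Finset.mem_image.mp hxu
    obtain ⟨e2, he2, he⟩ := Finset.mem_image.mp hxv
    have : e2 = e1 := hti (hDv_nd e2 he2) (hDu_nd e1 he1) he
    subst this
    rw [aux_common huv he1 he2]
  set X := (Su.filter fun x => x + p ∉ Su ∧ x + p ≤ ε).erase (t euv) with hX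
  set Y := (((Sv.filter fun y => p + 1 ≤ y ∧ y - p ∉ Sv).erase (t euv)).filter
      fun y => ∀ x ∈ X, y ≠ x + 2 * p) with hY
  set W := X ∪ Y.image (fun y => y - p) with hW
  have hXmem : ∀ x ∈ X, x ∈ Su ∧ x + p ∉ Su ∧ x + p ≤ ε ∧ x ≠ t euv := by
    intro x hx
    simp only [hX, Finset.mem_erase, Finset.mem_filter] at hx
    exact ⟨hx.2.1, hx.2.2.1, hx.2.2.2, hx.1⟩
  have hYmem : ∀ y ∈ Y, y ∈ Sv ∧ p + 1 ≤ y ∧ y - p ∉ Sv ∧ y ≠ t euv ∧ ∀ x ∈ X, y ≠ x + 2 * p := by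
    intro y hy
    simp only [hY, Finset.mem_filter, Finset.mem_erase] at hy
    exact ⟨hy.1.2.1, hy.1.2.2.1, hy.1.2.2.2, hy.1.1, hy.2⟩
  have hWmem : ∀ z, z ∈ W ↔ (z ∈ X ∨ ∃ y ∈ Y, y - p = z) := by
    intro z
    simp [hW, Finset.mem_union, Finset.mem_image]
  have hWb : ∀ z ∈ W, 1 ≤ z ∧ z + p ≤ ε := by
    intro z hz
    rcases (hWmem z).mp hz with hzX | ⟨y, hyY, rfl⟩
    · obtain ⟨h1, h2, h3, h4⟩ := hXmem z hzX
      exact ⟨(hSub z h1).1, h3⟩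
    · obtain ⟨h1, h2, h3, h4, h5⟩ := hYmem y hyY
      have hy2 := (hSvb y h1).2
      constructor <;> omega
  have hWdisj : ∀ z ∈ W, z + p ∉ W := by
    intro z hz hzp
    rcases (hWmem z).mp hz with hzX | ⟨y, hyY, hyz⟩
    · rcases (hWmem _).mp hzp with hX2 | ⟨y', hy'Y, hy'z⟩
      · exact (hXmem z hzX).2.1 (hXmem _ hX2).1
      · -- y' - p = z + p, y' ≥ p+1, so y' = z + 2p, contradicting y' filter
        obtain ⟨-, hy'p, -, -, hforb⟩ := hYmem y' hy'Y
        exact hforb z hzX (by omega)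
    · obtain ⟨hySv, hyp, hymem, hyne, -⟩ := hYmem y hyY
      have hzy : z + p = y := by omega
      rcases (hWmem _).mp hzp with hX2 | ⟨y', hy'Y, hy'z⟩
      · -- z + p = y ∈ Su ∩ Sv, so y = t euv, contradiction
        have : y ∈ Su := hzy ▸ (hXmem _ hX2).1
        exact hyne (hshared y this hySv)
      · -- y' - p = y, but y' ∈ Y means y' - p ∉ Sv
        obtain ⟨-, hy'p, hy'mem, -, -⟩ := hYmem y' hy'Y
        exact hy'mem (by rw [hy'z, hzy]; exact hySv)
  set Wp := W.image (fun w => w + p) with hWp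
  have hWpmem : ∀ z, z ∈ Wp ↔ ∃ w ∈ W, w + p = z := by
    intro z; simp [hWp, Finset.mem_image]
  have hWWp : ∀ z ∈ Wp, z ∉ W := by
    intro z hz hzW
    obtain ⟨w, hw, rfl⟩ := (hWpmem z).mp hz
    exact hWdisj w hw hzW
  set π : ℕ → ℕ := fun z => if z ∈ W then z + p else if z ∈ Wp then z - p else z with hπ
  have hπW : ∀ z ∈ W, π z = z + p := by intro z hz; simp [hπ, hz]
  have hπWp : ∀ z ∈ Wp, π z = z - p := by
    intro z hz; simp [hπ, hz, hWWp z hz]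
  have hπid : ∀ z, z ∉ W → z ∉ Wp → π z = z := by
    intro z h1 h2; simp [hπ, h1, h2]
  have hππ : ∀ z, π (π z) = z := by
    intro z
    by_cases h1 : z ∈ W
    · rw [hπW z h1]
      have h2 : z + p ∈ Wp := (hWpmem _).mpr ⟨z, h1, rfl⟩
      rw [hπWp _ h2]
      omega
    · by_cases h2 : z ∈ Wp
      · obtain ⟨w, hw, rfl⟩ := (hWpmem z).mp h2
        rw [hπWp _ h2]
        have : w + p - p = w := by omega
        rw [this, hπW w hw]
      · rw [hπid z h1 h2, hπid z h1 h2]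
  have hπmaps : ∀ z, z ∈ Set.Icc 1 ε → π z ∈ Set.Icc 1 ε := by
    intro z hz
    rw [Set.mem_Icc] at hz ⊢
    by_cases h1 : z ∈ W
    · rw [hπW z h1]
      have := hWb z h1
      omega
    · by_cases h2 : z ∈ Wp
      · obtain ⟨w, hw, rfl⟩ := (hWpmem z).mp h2
        rw [hπWp _ h2]
        have := hWb w hw
        omega
      · rw [hπid z h1 h2]; exact hz
  have hπbij : Set.BijOn π (Set.Icc 1 ε) (Set.Icc 1 ε) := by
    refine ⟨hπmaps, Function.Injective.injOn ?_, ?_⟩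
    · exact Function.LeftInverse.injective hππ
    · intro w hw
      exact ⟨π w, hπmaps w hw, hππ w⟩
  set t' : Sym2 (Fin n) → ℕ := fun e => π (t e) with ht'
  have ht'lab : Swap.IsEdgeLabeling n t' := hπbij.comp ht
  have hπmove : ∀ z : ℕ, |(π z : ℤ) - z| ≤ (p : ℤ) := by
    intro z
    by_cases h1 : z ∈ W
    · rw [hπW z h1]; simp
    · by_cases h2 : z ∈ Wp
      · obtain ⟨w, hw, rfl⟩ := (hWpmem z).mp h2
        rw [hπWp _ h2]
        have : w + p - p = w := by omega
        rw [this]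
        push_cast
        rw [abs_sub_comm]
        simp [abs_of_nonneg]
      · rw [hπid z h1 h2]; simp
  have ht'swap : Swap.IsPSwap n p t t' := ⟨ht'lab, fun e _ => hπmove (t e)⟩
  -- sum computations
  have hsum : ∀ w : Fin n, Swap.labelSum n t' w - Swap.labelSum n t w
      = ∑ x ∈ (Swap.incEdges n w).image t, ((π x : ℤ) - x) := by
    intro w
    rw [Finset.sum_image (fun a ha b hb hab => hti ((aux_mem_inc.mp ha).2) ((aux_mem_inc.mp hb).2) hab)]
    rw [Swap.labelSum, Swap.labelSum, ← Finset.sum_sub_distrib]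
  have hSuWp : ∀ x ∈ Su, x ∉ Wp := by
    intro x hx hxp
    obtain ⟨w, hw, rfl⟩ := (hWpmem x).mp hxp
    rcases (hWmem w).mp hw with hwX | ⟨y, hyY, rfl⟩
    · exact (hXmem w hwX).2.1 hx
    · obtain ⟨hySv, hyp, -, hyne, -⟩ := hYmem y hyY
      have hxy : y - p + p = y := by omega
      rw [hxy] at hx
      exact hyne (hshared y hx hySv)
  have hSvW : ∀ y ∈ Sv, y ∉ W := by
    intro y hy hyW
    rcases (hWmem y).mp hyW with hyX | ⟨y', hy'Y, rfl⟩
    · exact (hXmem y hyX).2.2.2 (hshared y (hXmem y hyX).1 hy)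
    · exact (hYmem y' hy'Y).2.2.1 hy
  have hXsub : X ⊆ Su.filter (· ∈ W) := by
    intro x hx
    rw [Finset.mem_filter]
    exact ⟨(hXmem x hx).1, (hWmem x).mpr (Or.inl hx)⟩
  have hYsub : Y ⊆ Sv.filter (· ∈ Wp) := by
    intro y hy
    rw [Finset.mem_filter]
    refine ⟨(hYmem y hy).1, (hWpmem y).mpr ⟨y - p, (hWmem _).mpr (Or.inr ⟨y, hy, rfl⟩), ?_⟩⟩
    have := (hYmem y hy).2.1
    omega
  have hgain_u : (p : ℤ) * X.card ≤ Swap.labelSum n t' u - Swap.labelSum n t u := by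
    rw [hsum u, ← Finset.sum_filter_add_sum_filter_not Su (· ∈ W)]
    have h2 : ∑ x ∈ Su.filter (fun x => ¬ x ∈ W), ((π x : ℤ) - x) = 0 := by
      apply Finset.sum_eq_zero
      intro x hx
      rw [Finset.mem_filter] at hx
      rw [hπid x hx.2 (hSuWp x hx.1)]
      ring
    have h1 : ∑ x ∈ Su.filter (· ∈ W), ((π x : ℤ) - x) = (p : ℤ) * (Su.filter (· ∈ W)).card := by
      rw [Finset.sum_congr rfl (g := fun _ => (p : ℤ)) ?_]
      · rw [Finset.sum_const, nsmul_eq_mul, mul_comm]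
      · intro x hx
        rw [Finset.mem_filter] at hx
        rw [hπW x hx.2]
        push_cast; ring
    rw [h1, h2, add_zero]
    have := Finset.card_le_card hXsub
    have hpn : (0:ℤ) ≤ (p:ℤ) := by positivity
    exact mul_le_mul_of_nonneg_left (by exact_mod_cast this) hpn
  have hgain_v : Swap.labelSum n t' v - Swap.labelSum n t v ≤ -((p : ℤ) * Y.card) := by
    rw [hsum v, ← Finset.sum_filter_add_sum_filter_not Sv (· ∈ Wp)]
    have h2 : ∑ x ∈ Sv.filter (fun x => ¬ x ∈ Wp), ((π x : ℤ) - x) = 0 := by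
      apply Finset.sum_eq_zero
      intro x hx
      rw [Finset.mem_filter] at hx
      rw [hπid x (hSvW x hx.1) hx.2]
      ring
    have h1 : ∑ x ∈ Sv.filter (· ∈ Wp), ((π x : ℤ) - x) = -((p : ℤ) * (Sv.filter (· ∈ Wp)).card) := by
      rw [Finset.sum_congr rfl (g := fun _ => -(p : ℤ)) ?_]
      · rw [Finset.sum_const, nsmul_eq_mul]; ring
      · intro x hx
        rw [Finset.mem_filter] at hx
        rw [hπWp x hx.2]
        obtain ⟨w, hw, rfl⟩ := (hWpmem x).mp hx.2
        have : w + p - p = w := by omega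
        rw [this]
        push_cast; ring
    rw [h1, h2, add_zero]
    have := Finset.card_le_card hYsub
    have hpn : (0:ℤ) ≤ (p:ℤ) := by positivity
    have hc : ((Y.card : ℤ)) ≤ ((Sv.filter (· ∈ Wp)).card : ℤ) := by exact_mod_cast this
    have := mul_le_mul_of_nonneg_left hc hpn
    linarith
  -- cardinality bound for X
  have hXcard : Su.card ≤ X.card + (Swap.Uplus n p t u).card + p + 1 := by
    set A := (Swap.Uplus n p t u).image t with hA
    set I := Finset.Icc (ε - p + 1) ε with hI
    have hsub : Su ⊆ X ∪ A ∪ I ∪ {t euv} := by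
      intro x hx
      simp only [Finset.mem_union, Finset.mem_singleton]
      by_cases hxX : x ∈ X
      · exact Or.inl (Or.inl (Or.inl hxX))
      · by_cases hxe : x = t euv
        · exact Or.inr hxe
        · have hxf : ¬ (x + p ∉ Su ∧ x + p ≤ ε) := by
            intro hcon
            exact hxX (Finset.mem_erase.mpr ⟨hxe, Finset.mem_filter.mpr ⟨hx, hcon⟩⟩)
          push_neg at hxf
          by_cases hxp : x + p ∈ Su
          · -- x is label of an edge in Uplus
            obtain ⟨e, he, rfl⟩ := Finset.mem_image.mp hx
            obtain ⟨e', he', hte'⟩ := Finset.mem_image.mp hxp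
            refine Or.inl (Or.inl (Or.inr (Finset.mem_image.mpr ⟨e, ?_, rfl⟩)))
            rw [Swap.Uplus, Finset.mem_filter]
            exact ⟨he, e', he', hte'⟩
          · obtain ⟨hx1, hxε⟩ := hSub x hx
            have := hxf hxp
            refine Or.inl (Or.inr ?_)
            rw [hI, Finset.mem_Icc]
            omega
    have hIcard : I.card ≤ p := by
      rw [hI, Nat.card_Icc]; omega
    have hAcard : A.card ≤ (Swap.Uplus n p t u).card := Finset.card_image_le
    calc Su.card ≤ (X ∪ A ∪ I ∪ {t euv}).card := Finset.card_le_card hsub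
      _ ≤ (X ∪ A ∪ I).card + ({t euv} : Finset ℕ).card := Finset.card_union_le _ _
      _ ≤ (X ∪ A).card + I.card + 1 := by
          have := Finset.card_union_le (X ∪ A) I
          simp only [Finset.card_singleton]
          omega
      _ ≤ X.card + A.card + I.card + 1 := by
          have := Finset.card_union_le X A
          omega
      _ ≤ X.card + (Swap.Uplus n p t u).card + p + 1 := by omega
  -- the set of labels at v excluded due to type II bad pairs
  set R := Sv.filter (fun y => ∃ x ∈ X, y = x + 2 * p) with hR
  have hRcard : R.card ≤ (Swap.badPairs n p t u v).card := by
    haveI : Nonempty (Sym2 (Fin n)) := ⟨euv⟩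
    set g := Function.invFunOn t {e : Sym2 (Fin n) | ¬ e.IsDiag} with hg
    have hgu : ∀ x ∈ Su, g x ∈ Du ∧ t (g x) = x := by
      intro x hx
      obtain ⟨e, he, rfl⟩ := Finset.mem_image.mp hx
      have hnd : e ∈ {e : Sym2 (Fin n) | ¬ e.IsDiag} := hDu_nd e he
      have h1 : g (t e) ∈ {e : Sym2 (Fin n) | ¬ e.IsDiag} :=
        Function.invFunOn_mem ⟨e, hnd, rfl⟩
      have h2 : t (g (t e)) = t e := Function.invFunOn_eq ⟨e, hnd, rfl⟩
      have : g (t e) = e := hti h1 hnd h2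
      rw [this]
      exact ⟨he, rfl⟩
    have hgv : ∀ y ∈ Sv, g y ∈ Dv ∧ t (g y) = y := by
      intro y hy
      obtain ⟨e, he, rfl⟩ := Finset.mem_image.mp hy
      have hnd : e ∈ {e : Sym2 (Fin n) | ¬ e.IsDiag} := hDv_nd e he
      have h1 : g (t e) ∈ {e : Sym2 (Fin n) | ¬ e.IsDiag} :=
        Function.invFunOn_mem ⟨e, hnd, rfl⟩
      have h2 : t (g (t e)) = t e := Function.invFunOn_eq ⟨e, hnd, rfl⟩
      have : g (t e) = e := hti h1 hnd h2
      rw [this]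
      exact ⟨he, rfl⟩
    have hRfacts : ∀ y ∈ R, y ∈ Sv ∧ y - 2 * p ∈ Su ∧ 2 * p + 1 ≤ y := by
      intro y hy
      rw [hR, Finset.mem_filter] at hy
      obtain ⟨hySv, x, hxX, rfl⟩ := hy
      have hx1 := (hSub x (hXmem x hxX).1).1
      exact ⟨hySv, by simpa using (hXmem x hxX).1, by omega⟩
    have hinj2 : R.card ≤ (Swap.badPairsII n p t u v).card := by
      apply Finset.card_le_card_of_injOn (fun y => s(g (y - 2 * p), g y))
      · intro y hy
        obtain ⟨hySv, hySu, hyb⟩ := hRfacts y hy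
        obtain ⟨he1, ht1⟩ := hgu _ hySu
        obtain ⟨he2, ht2⟩ := hgv _ hySv
        rw [Swap.badPairsII, Finset.mem_coe, Finset.mem_filter]
        refine ⟨Finset.mem_univ _, g (y - 2 * p), g y, rfl,
          (aux_mem_inc.mp he1).2, (aux_mem_inc.mp he2).2,
          (aux_mem_inc.mp he1).1, (aux_mem_inc.mp he2).1, ?_⟩
        rw [ht1, ht2]
        omega
      · intro y hy y' hy' heq
        obtain ⟨hySv, hySu, hyb⟩ := hRfacts y (by exact hy)
        obtain ⟨hy'Sv, hy'Su, hy'b⟩ := hRfacts y' (by exact hy')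
        simp only [Sym2.eq, Sym2.rel_iff', Prod.mk.injEq, Prod.swap_prod_mk] at heq
        rcases heq with ⟨h1, h2⟩ | ⟨h1, h2⟩
        · have := (hgv _ hySv).2
          rw [h2] at this
          rw [(hgv _ hy'Sv).2] at this
          exact this.symm
        · have e1 : y - 2 * p = y' := by
            have a1 := (hgu _ hySu).2
            rw [h1, (hgv _ hy'Sv).2] at a1
            exact a1.symm
          have e2 : y = y' - 2 * p := by
            have a2 := (hgv _ hySv).2
            rw [h2, (hgu _ hy'Su).2] at a2
            exact a2.symm
          omega
    refine le_trans hinj2 (Finset.card_le_card ?_)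
    rw [Swap.badPairs]
    exact Finset.subset_union_right
  have hYcard : Sv.card ≤ Y.card + (Swap.Uminus n p t v).card + p + 1
      + (Swap.badPairs n p t u v).card := by
    set A := (Swap.Uminus n p t v).image t with hA
    set I := Finset.Icc 1 p with hI
    have hsub : Sv ⊆ Y ∪ A ∪ I ∪ {t euv} ∪ R := by
      intro y hy
      simp only [Finset.mem_union, Finset.mem_singleton]
      by_cases hyY : y ∈ Y
      · exact Or.inl (Or.inl (Or.inl (Or.inl hyY)))
      · by_cases hyp : p + 1 ≤ y
        · by_cases hymem : y - p ∈ Sv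
          · -- y is label of an edge in Uminus
            obtain ⟨e, he, rfl⟩ := Finset.mem_image.mp hy
            obtain ⟨e', he', hte'⟩ := Finset.mem_image.mp hymem
            refine Or.inl (Or.inl (Or.inl (Or.inr (Finset.mem_image.mpr ⟨e, ?_, rfl⟩))))
            rw [Swap.Uminus, Finset.mem_filter]
            exact ⟨he, e', he', by omega⟩
          · by_cases hye : y = t euv
            · exact Or.inl (Or.inr hye)
            · -- must be excluded by a type II conflict
              have : ¬ ∀ x ∈ X, y ≠ x + 2 * p := by
                intro hall
                exact hyY (by
                  simp only [hY, Finset.mem_filter, Finset.mem_erase]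
                  exact ⟨⟨hye, hy, hyp, hymem⟩, hall⟩)
              push_neg at this
              obtain ⟨x, hxX, hyx⟩ := this
              exact Or.inr (Finset.mem_filter.mpr ⟨hy, x, hxX, hyx⟩)
        · refine Or.inl (Or.inl (Or.inr ?_))
          rw [hI, Finset.mem_Icc]
          have := (hSvb y hy).1
          omega
    have hIcard : I.card ≤ p := by rw [hI, Nat.card_Icc]; omega
    have hAcard : A.card ≤ (Swap.Uminus n p t v).card := Finset.card_image_le
    calc Sv.card ≤ (Y ∪ A ∪ I ∪ {t euv} ∪ R).card := Finset.card_le_card hsub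
      _ ≤ (Y ∪ A ∪ I ∪ {t euv}).card + R.card := Finset.card_union_le _ _
      _ ≤ (Y ∪ A ∪ I).card + 1 + R.card := by
          have := Finset.card_union_le (Y ∪ A ∪ I) ({t euv} : Finset ℕ)
          simp only [Finset.card_singleton] at this
          omega
      _ ≤ (Y ∪ A).card + I.card + 1 + R.card := by
          have := Finset.card_union_le (Y ∪ A) I
          omega
      _ ≤ Y.card + A.card + I.card + 1 + R.card := by
          have := Finset.card_union_le Y A
          omega
      _ ≤ Y.card + (Swap.Uminus n p t v).card + p + 1 + (Swap.badPairs n p t u v).card := by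
          omega
  -- final assembly
  have hkey : 2 * (n : ℤ) - 2 * (p : ℤ) - 4 - (ℓ : ℤ) ≤ (X.card : ℤ) + (Y.card : ℤ) := by
    have c1 := hXcard
    have c2 := hYcard
    rw [hSu_card] at c1
    rw [hSv_card] at c2
    omega
  refine ⟨t', ht'swap, ?_⟩
  have h2 : (p : ℤ) * (2 * (n : ℤ) - 2 * (p : ℤ) - 4 - (ℓ : ℤ))
      ≤ (p : ℤ) * ((X.card : ℤ) + (Y.card : ℤ)) :=
    mul_le_mul_of_nonneg_left hkey (by positivity)
  have h3 := le_abs_self (Swap.labelSum n t' u - Swap.labelSum n t' v)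
  have h4 := neg_abs_le (Swap.labelSum n t u - Swap.labelSum n t v)
  push_cast at h2 ⊢
  linarith [hgain_u, hgain_v]
end

section
/- Let t be an edge labeling of K_n (n ≥ 2) and p a positive integer with 2p ≤ ε_n. Then the sum over all unordered pairs {u,v} of distinct vertices of |B₁({u,v})| is at most 4(ε_n − p), and the sum over all unordered pairs {u,v} of distinct vertices of |B₂({u,v})| is at most 4(ε_n − 2p). -/
open Finset

section Aux
open scoped Classical

private lemma sym2_filter_card_le (n : ℕ) (e : Sym2 (Fin n)) :
    ((Finset.univ : Finset (Fin n)).filter (· ∈ e)).card ≤ 2 := by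
  refine Sym2.inductionOn e fun a b => ?_
  calc ((Finset.univ : Finset (Fin n)).filter (· ∈ s(a, b))).card
      ≤ ({a, b} : Finset (Fin n)).card := by
        apply Finset.card_le_card
        intro x hx
        simp only [Finset.mem_filter, Sym2.mem_iff] at hx
        simp [hx.2]
    _ ≤ 2 := (Finset.card_insert_le _ _).trans (by simp)

private lemma key (n q : ℕ) (hq : 1 ≤ q) (hqe : q ≤ Swap.eps n)
    (t : Sym2 (Fin n) → ℕ) (ht : Swap.IsEdgeLabeling n t) :
    (∑ x ∈ (Finset.univ : Finset (Fin n)).offDiag,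
      ((Finset.univ : Finset (Sym2 (Sym2 (Fin n)))).filter fun P =>
        ∃ e₁ e₂ : Sym2 (Fin n), P = s(e₁, e₂) ∧ ¬ e₁.IsDiag ∧ ¬ e₂.IsDiag ∧
          x.1 ∈ e₁ ∧ x.2 ∈ e₂ ∧ ((t e₁ : ℤ) - (t e₂ : ℤ)).natAbs = q).card)
      ≤ 2 * (4 * (Swap.eps n - q)) := by
  set ε := Swap.eps n with hε
  have hlabel : ∀ e : Sym2 (Fin n), ¬ e.IsDiag → 1 ≤ t e ∧ t e ≤ ε := by
    intro e he
    exact Set.mem_Icc.mp (ht.mapsTo he)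
  have hinj : ∀ e f : Sym2 (Fin n), ¬ e.IsDiag → ¬ f.IsDiag → t e = t f → e = f := by
    intro e f he hf h
    exact ht.injOn he hf h
  set bad : Fin n × Fin n → Finset (Sym2 (Sym2 (Fin n))) := fun x =>
    (Finset.univ : Finset (Sym2 (Sym2 (Fin n)))).filter fun P =>
      ∃ e₁ e₂ : Sym2 (Fin n), P = s(e₁, e₂) ∧ ¬ e₁.IsDiag ∧ ¬ e₂.IsDiag ∧
        x.1 ∈ e₁ ∧ x.2 ∈ e₂ ∧ ((t e₁ : ℤ) - (t e₂ : ℤ)).natAbs = q with hbad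
  set B : Finset (Sym2 (Sym2 (Fin n))) :=
    (Finset.univ : Finset (Sym2 (Sym2 (Fin n)))).filter fun P =>
      ∃ e₁ e₂ : Sym2 (Fin n), P = s(e₁, e₂) ∧ ¬ e₁.IsDiag ∧ ¬ e₂.IsDiag ∧
        ((t e₁ : ℤ) - (t e₂ : ℤ)).natAbs = q with hBdef
  have hsub : ∀ x, bad x ⊆ B := by
    intro x P hP
    rw [hbad, Finset.mem_filter] at hP
    obtain ⟨-, e₁, e₂, rfl, h1, h2, -, -, h5⟩ := hP
    rw [hBdef, Finset.mem_filter]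
    exact ⟨Finset.mem_univ _, e₁, e₂, rfl, h1, h2, h5⟩
  have hB : B.card ≤ ε - q := by
    have hc := Finset.card_le_card_of_injOn (s := B)
      (f := fun P : Sym2 (Sym2 (Fin n)) =>
        Sym2.lift ⟨fun a b => min (t a) (t b), fun a b => min_comm _ _⟩ P)
      (t := Finset.Icc 1 (ε - q)) ?_ ?_
    · simpa using hc
    · intro P hP
      rw [hBdef, Finset.mem_coe, Finset.mem_filter] at hP
      obtain ⟨-, e₁, e₂, rfl, h1, h2, h5⟩ := hP
      have k1 := hlabel e₁ h1
      have k2 := hlabel e₂ h2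
      simp only [Sym2.lift_mk, Finset.mem_coe, Finset.mem_Icc]
      omega
    · intro P hP P' hP' hL
      simp only [hBdef, Finset.coe_filter, Set.mem_setOf_eq] at hP hP'
      obtain ⟨-, e₁, e₂, rfl, h1, h2, h5⟩ := hP
      obtain ⟨-, f₁, f₂, rfl, g1, g2, g5⟩ := hP'
      simp only [Sym2.lift_mk] at hL
      have k1 := hlabel e₁ h1
      have k2 := hlabel e₂ h2
      have l1 := hlabel f₁ g1
      have l2 := hlabel f₂ g2
      rcases (show t e₁ = t f₁ ∧ t e₂ = t f₂ ∨ t e₁ = t f₂ ∧ t e₂ = t f₁ by omega) with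
        ⟨ha, hb⟩ | ⟨ha, hb⟩
      · rw [hinj e₁ f₁ h1 g1 ha, hinj e₂ f₂ h2 g2 hb]
      · rw [hinj e₁ f₂ h1 g2 ha, hinj e₂ f₁ h2 g1 hb, Sym2.eq_swap]
  have hcount : ∀ P ∈ B,
      (∑ x ∈ (Finset.univ : Finset (Fin n)).offDiag, if P ∈ bad x then 1 else 0) ≤ 8 := by
    intro P hP
    rw [hBdef, Finset.mem_filter] at hP
    obtain ⟨-, e₁, e₂, rfl, h1, h2, -⟩ := hP
    rw [← Finset.card_filter]
    set F : Sym2 (Fin n) → Finset (Fin n) := fun e => Finset.univ.filter (· ∈ e) with hF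
    have hss : ((Finset.univ : Finset (Fin n)).offDiag.filter
        fun x => s(e₁, e₂) ∈ bad x) ⊆ (F e₁ ×ˢ F e₂) ∪ (F e₂ ×ˢ F e₁) := by
      intro x hx
      rw [Finset.mem_filter, hbad, Finset.mem_filter] at hx
      obtain ⟨-, -, f₁, f₂, heq, -, -, hx1, hx2, -⟩ := hx
      rcases Sym2.eq_iff.mp heq with ⟨rfl, rfl⟩ | ⟨rfl, rfl⟩
      · exact Finset.mem_union_left _ (Finset.mem_product.mpr
          ⟨Finset.mem_filter.mpr ⟨Finset.mem_univ _, hx1⟩,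
           Finset.mem_filter.mpr ⟨Finset.mem_univ _, hx2⟩⟩)
      · exact Finset.mem_union_right _ (Finset.mem_product.mpr
          ⟨Finset.mem_filter.mpr ⟨Finset.mem_univ _, hx1⟩,
           Finset.mem_filter.mpr ⟨Finset.mem_univ _, hx2⟩⟩)
    have c1 : (F e₁).card ≤ 2 := sym2_filter_card_le n e₁
    have c2 : (F e₂).card ≤ 2 := sym2_filter_card_le n e₂
    have := Finset.card_le_card hss
    have hcu := Finset.card_union_le (F e₁ ×ˢ F e₂) (F e₂ ×ˢ F e₁)
    rw [Finset.card_product, Finset.card_product] at hcu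
    have m1 := Nat.mul_le_mul c1 c2
    have m2 := Nat.mul_le_mul c2 c1
    omega
  calc ∑ x ∈ (Finset.univ : Finset (Fin n)).offDiag, (bad x).card
      = ∑ x ∈ (Finset.univ : Finset (Fin n)).offDiag,
          ∑ P ∈ B, if P ∈ bad x then 1 else 0 := by
        refine Finset.sum_congr rfl fun x hx => ?_
        have hx' : bad x = B.filter (· ∈ bad x) := by
          rw [Finset.filter_mem_eq_inter, Finset.inter_eq_right.mpr (hsub x)]
        conv_lhs => rw [hx', Finset.card_filter]
    _ = ∑ P ∈ B, ∑ x ∈ (Finset.univ : Finset (Fin n)).offDiag,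
          if P ∈ bad x then 1 else 0 := Finset.sum_comm
    _ ≤ ∑ _P ∈ B, 8 := Finset.sum_le_sum hcount
    _ ≤ 2 * (4 * (ε - q)) := by
        rw [Finset.sum_const, smul_eq_mul]
        omega

end Aux

/-- The sum over unordered pairs of distinct vertices is stated as half of the sum
over ordered pairs of distinct vertices (the summand is symmetric in `u, v`). -/
theorem stmt4 (n p : ℕ) (hn : 2 ≤ n) (hp : 1 ≤ p) (h2p : 2 * p ≤ Swap.eps n)
    (t : Sym2 (Fin n) → ℕ) (ht : Swap.IsEdgeLabeling n t) :
    (∑ x ∈ (Finset.univ : Finset (Fin n)).offDiag, (Swap.badPairsI n p t x.1 x.2).card)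
        ≤ 2 * (4 * (Swap.eps n - p)) ∧
    (∑ x ∈ (Finset.univ : Finset (Fin n)).offDiag, (Swap.badPairsII n p t x.1 x.2).card)
        ≤ 2 * (4 * (Swap.eps n - 2 * p)) := by
  constructor
  · have h := key n p hp (le_trans (by omega) h2p) t ht
    simpa only [Swap.badPairsI] using h
  · have h := key n (2 * p) (by omega) h2p t ht
    simpa only [Swap.badPairsII] using h
end

section
/- Let p : ℕ → ℕ be admissible, let α : ℕ → ℕ satisfy α(n) = O(n), and for each n ≥ 2 let t_n be an α(n)-almost supermagic edge labeling of K_n. Suppose there is m : ℕ → ℕ with m(n)·p(n)/n² → 0 such that for each n the set {1,…,ε_n} can be partitioned into m(n) 1-APs I₁,…,I_{m(n)} such that |I_i ∩ S(t_n,v)| ≤ 1 for every vertex v of K_n and every i ∈ [m(n)]. Then limsup_{n→∞} R(p(n), t_n, n)/(2·p(n)·n) = 1. -/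
open Finset

open Finset Swap

namespace SwapAux
open scoped Classical

variable {n : ℕ}

lemma mem_incEdges {v : Fin n} {e : Sym2 (Fin n)} :
    e ∈ incEdges n v ↔ v ∈ e ∧ ¬ e.IsDiag := by
  simp [incEdges]

lemma incEdges_eq (v : Fin n) :
    incEdges n v = (Finset.univ.erase v).image (fun w => s(v, w)) := by
  ext e
  induction e with
  | _ x y =>
    simp only [mem_incEdges, Sym2.mem_iff, Sym2.isDiag_iff_proj_eq, Finset.mem_image,
      Finset.mem_erase, Finset.mem_univ, and_true]
    constructor
    · rintro ⟨h1 | h1, h2⟩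
      · exact ⟨y, fun h => h2 (h.trans h1).symm , by subst h1; rfl⟩
      · exact ⟨x, fun h => h2 (by rw [h, h1]), by subst h1; rw [Sym2.eq_swap]⟩
    · rintro ⟨w, hw, he⟩
      rw [Sym2.eq_iff] at he
      rcases he with ⟨rfl, rfl⟩ | ⟨rfl, rfl⟩
      · exact ⟨Or.inl rfl, fun h => hw h.symm⟩
      · exact ⟨Or.inr rfl, fun h => hw h⟩

lemma card_incEdges (v : Fin n) : (incEdges n v).card = n - 1 := by
  rw [incEdges_eq, Finset.card_image_of_injOn, Finset.card_erase_of_mem (Finset.mem_univ v)]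
  · simp
  · intro a ha b hb hab
    rw [Sym2.eq_iff] at hab
    simp only [Finset.coe_erase, Set.mem_diff, Set.mem_singleton_iff] at ha hb
    rcases hab with ⟨-, h⟩ | ⟨h1, h2⟩
    · exact h
    · exact absurd h2 ha.2

lemma two_mem_card {e : Sym2 (Fin n)} (he : ¬ e.IsDiag) :
    (Finset.univ.filter fun v : Fin n => v ∈ e).card = 2 := by
  induction e with
  | _ x y =>
    have hxy : x ≠ y := by simpa [Sym2.isDiag_iff_proj_eq] using he
    have : (Finset.univ.filter fun v : Fin n => v ∈ s(x,y)) = {x, y} := by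
      ext v; simp [Sym2.mem_iff]
    rw [this, Finset.card_insert_of_notMem (by simp [hxy]), Finset.card_singleton]


variable {t : Sym2 (Fin n) → ℕ}

lemma injOn_t (hl : IsEdgeLabeling n t) : Set.InjOn t {e : Sym2 (Fin n) | ¬ e.IsDiag} :=
  hl.injOn

lemma label_mem (hl : IsEdgeLabeling n t) {e : Sym2 (Fin n)} (he : ¬ e.IsDiag) :
    t e ∈ Finset.Icc 1 (eps n) := by
  have := hl.mapsTo he
  simpa [Finset.mem_Icc, Set.mem_Icc] using this

lemma mem_labelSet {a : ℕ} {v : Fin n} :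
    a ∈ labelSet n t v ↔ ∃ e ∈ incEdges n v, t e = a := by
  simp [labelSet]

lemma labelSet_subset (hl : IsEdgeLabeling n t) (v : Fin n) :
    labelSet n t v ⊆ Finset.Icc 1 (eps n) := by
  intro a ha
  rcases mem_labelSet.1 ha with ⟨e, he, rfl⟩
  exact label_mem hl (mem_incEdges.1 he).2

lemma labelSet_card (hl : IsEdgeLabeling n t) (v : Fin n) :
    (labelSet n t v).card = n - 1 := by
  rw [labelSet, Finset.card_image_of_injOn, card_incEdges]
  intro a ha b hb hab
  exact hl.injOn (mem_incEdges.1 ha).2 (mem_incEdges.1 hb).2 hab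

lemma eq_uv_edge (hl : IsEdgeLabeling n t) {u v : Fin n} (huv : u ≠ v) {a : ℕ}
    (hau : a ∈ labelSet n t u) (hav : a ∈ labelSet n t v) : a = t s(u, v) := by
  rcases mem_labelSet.1 hau with ⟨e1, he1, rfl⟩
  rcases mem_labelSet.1 hav with ⟨e2, he2, h2⟩
  have h1 := mem_incEdges.1 he1
  have h2' := mem_incEdges.1 he2
  have heq : e2 = e1 := hl.injOn h2'.2 h1.2 h2
  subst heq
  have : e2 = s(u, v) := ((Sym2.mem_and_mem_iff huv).1 ⟨h1.1, h2'.1⟩)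
  rw [this]

lemma labelSet_inter_card (hl : IsEdgeLabeling n t) {u v : Fin n} (huv : u ≠ v) :
    (labelSet n t u ∩ labelSet n t v).card ≤ 1 := by
  apply Finset.card_le_one.2
  intro a ha b hb
  simp only [Finset.mem_inter] at ha hb
  rw [eq_uv_edge hl huv ha.1 ha.2, eq_uv_edge hl huv hb.1 hb.2]

lemma labelSet_filter_card (hl : IsEdgeLabeling n t) (P : ℕ → Prop) [DecidablePred P]
    (v : Fin n) :
    ((labelSet n t v).filter P).card = ((incEdges n v).filter fun e => P (t e)).card := by
  rw [labelSet, Finset.filter_image, Finset.card_image_of_injOn]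
  intro a ha b hb hab
  exact hl.injOn (mem_incEdges.1 (Finset.mem_filter.1 ha).1).2
    (mem_incEdges.1 (Finset.mem_filter.1 hb).1).2 hab

lemma double_count (hl : IsEdgeLabeling n t) (P : ℕ → Prop) [DecidablePred P] :
    ∑ v : Fin n, ((labelSet n t v).filter P).card
      = 2 * ((Finset.Icc 1 (eps n)).filter P).card := by
  have h1 : ∀ v : Fin n, ((labelSet n t v).filter P).card
      = ∑ e ∈ Finset.univ.filter (fun e : Sym2 (Fin n) => ¬ e.IsDiag ∧ P (t e)),
          (if v ∈ e then 1 else 0) := by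
    intro v
    rw [labelSet_filter_card hl P v]
    rw [Finset.card_filter]
    rw [Finset.sum_filter]
    rw [incEdges, Finset.sum_filter]
    apply Finset.sum_congr rfl
    intro e _
    by_cases hd : e.IsDiag <;> by_cases hp : P (t e) <;> by_cases hv : v ∈ e <;> simp [hd, hp, hv]
  rw [Finset.sum_congr rfl fun v _ => h1 v]
  rw [Finset.sum_comm]
  have h2 : ∀ e ∈ Finset.univ.filter (fun e : Sym2 (Fin n) => ¬ e.IsDiag ∧ P (t e)),
      (∑ v : Fin n, if v ∈ e then 1 else 0) = 2 := by
    intro e he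
    have hd := (Finset.mem_filter.1 he).2.1
    rw [← Finset.card_filter]
    exact two_mem_card hd
  rw [Finset.sum_congr rfl h2, Finset.sum_const, smul_eq_mul, mul_comm]
  congr 1
  apply Finset.card_bij (fun e _ => t e)
  · intro e he
    have h := (Finset.mem_filter.1 he).2
    exact Finset.mem_filter.2 ⟨label_mem hl h.1, h.2⟩
  · intro e1 h1 e2 h2 h
    exact hl.injOn (Finset.mem_filter.1 h1).2.1 (Finset.mem_filter.1 h2).2.1 h
  · intro a ha
    have h := Finset.mem_filter.1 ha
    have : a ∈ Set.Icc 1 (eps n) := by simpa [Set.mem_Icc] using Finset.mem_Icc.1 h.1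
    rcases hl.surjOn this with ⟨e, he, rfl⟩
    exact ⟨e, Finset.mem_filter.2 ⟨Finset.mem_univ _, he, h.2⟩, rfl⟩


section Intervals
variable {M E q : ℕ} {I : Fin M → Finset ℕ}

lemma global_count (hcover : Finset.univ.biUnion I = Finset.Icc 1 E)
    (P : ℕ → Prop) [DecidablePred P] (hloc : ∀ i, ((I i).filter P).card ≤ q) :
    ((Finset.Icc 1 E).filter P).card ≤ M * q := by
  rw [← hcover, Finset.filter_biUnion]
  simpa using Finset.card_biUnion_le_card_mul Finset.univ _ q (fun i _ => hloc i)

lemma up_defect_count (hAP : ∀ i, IsAP1 (I i))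
    (hcover : Finset.univ.biUnion I = Finset.Icc 1 E) :
    ((Finset.Icc 1 E).filter fun a => ¬ ∃ i, a ∈ I i ∧ a + q ∈ I i).card ≤ M * q := by
  apply global_count hcover
  intro i
  obtain ⟨x, y, hxy, hI⟩ := hAP i
  calc ((I i).filter fun a => ¬ ∃ j, a ∈ I j ∧ a + q ∈ I j).card
      ≤ (Finset.Icc (y + 1 - q) y).card := by
        apply Finset.card_le_card
        intro a ha
        have h := Finset.mem_filter.1 ha
        have ha1 : a ∈ Finset.Icc x y := hI ▸ h.1
        rw [Finset.mem_Icc] at ha1 ⊢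
        have : ¬ (a + q ∈ I i) := fun hc => h.2 ⟨i, h.1, hc⟩
        rw [hI, Finset.mem_Icc] at this
        omega
    _ ≤ q := by rw [Nat.card_Icc]; omega

lemma down_defect_count (hAP : ∀ i, IsAP1 (I i))
    (hcover : Finset.univ.biUnion I = Finset.Icc 1 E) :
    ((Finset.Icc 1 E).filter fun a => ¬ ∃ i, a ∈ I i ∧ q ≤ a ∧ a - q ∈ I i).card ≤ M * q := by
  apply global_count hcover
  intro i
  obtain ⟨x, y, hxy, hI⟩ := hAP i
  have hx1 : 1 ≤ x := by
    have hxm : x ∈ Finset.Icc 1 E := by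
      rw [← hcover]
      exact Finset.mem_biUnion.2 ⟨i, Finset.mem_univ _,
        hI ▸ Finset.mem_Icc.2 ⟨le_refl x, hxy⟩⟩
    exact (Finset.mem_Icc.1 hxm).1
  calc ((I i).filter fun a => ¬ ∃ j, a ∈ I j ∧ q ≤ a ∧ a - q ∈ I j).card
      ≤ (Finset.Icc x (x + q - 1)).card := by
        apply Finset.card_le_card
        intro a ha
        have h := Finset.mem_filter.1 ha
        have ha1 : a ∈ Finset.Icc x y := hI ▸ h.1
        rw [Finset.mem_Icc] at ha1 ⊢
        have : ¬ (q ≤ a ∧ a - q ∈ I i) := fun hc => h.2 ⟨i, h.1, hc.1, hc.2⟩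
        rw [hI, Finset.mem_Icc] at this
        omega
    _ ≤ q := by rw [Nat.card_Icc]; omega

lemma mem_interval (hcover : Finset.univ.biUnion I = Finset.Icc 1 E) {a : ℕ}
    (ha : a ∈ Finset.Icc 1 E) : ∃ i, a ∈ I i := by
  rw [← hcover] at ha
  rcases Finset.mem_biUnion.1 ha with ⟨i, _, hi⟩
  exact ⟨i, hi⟩

lemma interval_unique (hdisj : (Set.univ : Set (Fin M)).PairwiseDisjoint I) {a : ℕ}
    {i j : Fin M} (hi : a ∈ I i) (hj : a ∈ I j) : i = j := by
  by_contra h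
  exact Finset.disjoint_left.1 (hdisj (Set.mem_univ i) (Set.mem_univ j) h) hi hj

end Intervals

lemma exists_min_avg {β : Type*} {s : Finset β} (hs : s.Nonempty) (f : β → ℕ) :
    ∃ v ∈ s, s.card * f v ≤ ∑ w ∈ s, f w := by
  obtain ⟨v, hv, hmin⟩ := Finset.exists_min_image s f hs
  refine ⟨v, hv, ?_⟩
  calc s.card * f v = ∑ _w ∈ s, f v := by rw [Finset.sum_const, smul_eq_mul]
    _ ≤ ∑ w ∈ s, f w := Finset.sum_le_sum fun w hw => hmin w hw


lemma interval_subset {M E : ℕ} {I : Fin M → Finset ℕ}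
    (hcover : Finset.univ.biUnion I = Finset.Icc 1 E) (i : Fin M) :
    I i ⊆ Finset.Icc 1 E := by
  intro a ha
  rw [← hcover]
  exact Finset.mem_biUnion.2 ⟨i, Finset.mem_univ _, ha⟩

lemma key (n q M : ℕ) (t : Sym2 (Fin n) → ℕ) (hn : 2 ≤ n) (hq : 1 ≤ q)
    (hl : IsEdgeLabeling n t)
    (I : Fin M → Finset ℕ) (hAP : ∀ i, IsAP1 (I i))
    (hdisj : (Set.univ : Set (Fin M)).PairwiseDisjoint I)
    (hcover : Finset.univ.biUnion I = Finset.Icc 1 (eps n))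
    (hhit : ∀ (v : Fin n) (i : Fin M), (labelSet n t v ∩ I i).card ≤ 1) :
    ∃ (t' : Sym2 (Fin n) → ℕ) (u v : Fin n), IsPSwap n q t t' ∧ u ≠ v ∧
      ∃ f g : ℕ, n * f ≤ 2 * (M * q) ∧ (n - 1) * g ≤ 2 * (M * q) + 2 * (n - 1) ∧
        labelSum n t u - labelSum n t v + q * ((n : ℤ) - 2 - f) + q * ((n : ℤ) - 2 - g)
          ≤ labelSum n t' u - labelSum n t' v := by
  classical
  have hn0 : 0 < n := by omega
  have hq0 : q ≠ 0 := by omega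
  -- hit condition, elementwise
  have hhit' : ∀ (w : Fin n) (i : Fin M) {x y : ℕ}, x ∈ labelSet n t w →
      y ∈ labelSet n t w → x ∈ I i → y ∈ I i → x = y := by
    intro w i x y hx hy hxi hyi
    exact Finset.card_le_one.1 (hhit w i) x (Finset.mem_inter.2 ⟨hx, hxi⟩) y
      (Finset.mem_inter.2 ⟨hy, hyi⟩)
  -- choose u
  set fdef : Fin n → ℕ := fun w =>
    ((labelSet n t w).filter fun a => ¬ ∃ i, a ∈ I i ∧ a + q ∈ I i).card with hfdef
  have hfsum : ∑ w : Fin n, fdef w ≤ 2 * (M * q) := by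
    rw [double_count hl]
    exact Nat.mul_le_mul_left 2 (up_defect_count hAP hcover)
  have huniv : (Finset.univ : Finset (Fin n)).Nonempty :=
    ⟨⟨0, hn0⟩, Finset.mem_univ _⟩
  obtain ⟨u, -, hu⟩ := exists_min_avg huniv fdef
  have hu' : n * fdef u ≤ 2 * (M * q) := by
    rw [Finset.card_univ, Fintype.card_fin] at hu
    exact hu.trans hfsum
  -- choose v
  set gdef : Fin n → ℕ := fun w =>
    ((labelSet n t w).filter fun b => ¬ ∃ i, b ∈ I i ∧ q ≤ b ∧ b - q ∈ I i).card +
    ((labelSet n t w).filter fun b =>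
      ∃ a ∈ labelSet n t u, ∃ i, a ∈ I i ∧ b ∈ I i ∧ a + 2*q = b).card with hgdef
  have hgsum : ∑ w : Fin n, gdef w ≤ 2 * (M * q) + 2 * (n - 1) := by
    rw [Finset.sum_add_distrib]
    apply Nat.add_le_add
    · rw [double_count hl]
      exact Nat.mul_le_mul_left 2 (down_defect_count hAP hcover)
    · rw [double_count hl]
      apply Nat.mul_le_mul_left 2
      calc ((Finset.Icc 1 (eps n)).filter fun b =>
              ∃ a ∈ labelSet n t u, ∃ i, a ∈ I i ∧ b ∈ I i ∧ a + 2*q = b).card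
          ≤ ((labelSet n t u).image (fun a => a + 2*q)).card := by
            apply Finset.card_le_card
            intro b hb
            rcases Finset.mem_filter.1 hb with ⟨-, a, ha, i, -, -, hab⟩
            exact Finset.mem_image.2 ⟨a, ha, hab⟩
        _ ≤ (labelSet n t u).card := Finset.card_image_le
        _ = n - 1 := labelSet_card hl u
  have herase : (Finset.univ.erase u).Nonempty := by
    rw [← Finset.card_pos, Finset.card_erase_of_mem (Finset.mem_univ u),
      Finset.card_univ, Fintype.card_fin]
    omega
  obtain ⟨v, hvmem, hv⟩ := exists_min_avg herase gdef
  have hvu : v ≠ u := (Finset.mem_erase.1 hvmem).1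
  have hv' : (n - 1) * gdef v ≤ 2 * (M * q) + 2 * (n - 1) := by
    rw [Finset.card_erase_of_mem (Finset.mem_univ u), Finset.card_univ,
      Fintype.card_fin] at hv
    refine hv.trans (le_trans (Finset.sum_le_sum_of_subset (Finset.erase_subset _ _)) hgsum)
  -- the construction
  set Su := labelSet n t u with hSu
  set Sv := labelSet n t v with hSv
  set A' : Finset ℕ := Su.filter (fun a => a ∉ Sv ∧ ∃ i, a ∈ I i ∧ a + q ∈ I i) with hA'
  set B' : Finset ℕ := Sv.filter (fun b => b ∉ Su ∧ (∃ i, b ∈ I i ∧ q ≤ b ∧ b - q ∈ I i) ∧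
      ¬ ∃ a ∈ Su, ∃ i, a ∈ I i ∧ b ∈ I i ∧ a + 2*q = b) with hB'
  set C : Finset ℕ := A' ∪ B'.image (fun b => b - q) with hC
  have hCcases : ∀ c ∈ C, c ∈ A' ∨ ∃ b ∈ B', b - q = c := by
    intro c hc
    rcases Finset.mem_union.1 hc with h | h
    · exact Or.inl h
    · rcases Finset.mem_image.1 h with ⟨b, hb, hbe⟩
      exact Or.inr ⟨b, hb, hbe⟩
  -- key disjointness fact
  have hF1 : ∀ c ∈ C, c + q ∉ C := by
    intro c hc hc'
    rcases hCcases c hc with hA | ⟨b, hb, hbe⟩ <;>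
      rcases hCcases _ hc' with hA2 | ⟨b2, hb2, hb2e⟩
    · obtain ⟨hcSu, -, i, hci, hcqi⟩ := Finset.mem_filter.1 hA
      have hc2Su := (Finset.mem_filter.1 hA2).1
      have := hhit' u i hcSu hc2Su hci hcqi
      omega
    · obtain ⟨hcSu, -, i, hci, hcqi⟩ := Finset.mem_filter.1 hA
      obtain ⟨hb2Sv, hb2nSu, ⟨j, hb2j, hqb2, hb2qj⟩, hno⟩ := Finset.mem_filter.1 hb2
      have hij : i = j := by
        apply interval_unique hdisj hcqi
        have : b2 - q = c + q := hb2e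
        rw [← this]
        exact hb2qj
      exact hno ⟨c, hcSu, i, hci, hij ▸ hb2j, by omega⟩
    · obtain ⟨hbSv, hbnSu, ⟨j, hbj, hqb, hbqj⟩, -⟩ := Finset.mem_filter.1 hb
      have hbc : b = c + q := by omega
      exact hbnSu (hbc ▸ (Finset.mem_filter.1 hA2).1)
    · obtain ⟨hbSv, hbnSu, ⟨j, hbj, hqb, hbqj⟩, -⟩ := Finset.mem_filter.1 hb
      obtain ⟨hb2Sv, hb2nSu, ⟨j2, hb2j2, hqb2, hb2qj2⟩, -⟩ := Finset.mem_filter.1 hb2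
      have hbb2 : b2 - q = b := by omega
      have : b = b2 := hhit' v j2 hbSv hb2Sv (hbb2 ▸ hb2qj2) hb2j2
      omega
  -- bounds on C
  have hCbound : ∀ c ∈ C, 1 ≤ c ∧ c + q ≤ eps n := by
    intro c hc
    rcases hCcases c hc with hA | ⟨b, hb, hbe⟩
    · obtain ⟨hcSu, -, i, -, hcqi⟩ := Finset.mem_filter.1 hA
      exact ⟨(Finset.mem_Icc.1 (labelSet_subset hl u hcSu)).1,
        (Finset.mem_Icc.1 (interval_subset hcover i hcqi)).2⟩
    · obtain ⟨hbSv, -, ⟨i, -, hqb, hbqi⟩, -⟩ := Finset.mem_filter.1 hb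
      refine ⟨hbe ▸ (Finset.mem_Icc.1 (interval_subset hcover i hbqi)).1, ?_⟩
      have h2 := (Finset.mem_Icc.1 (labelSet_subset hl v hbSv)).2
      omega
  -- the permutation
  set σ : ℕ → ℕ := fun k => if k ∈ C then k + q
    else if q ≤ k ∧ k - q ∈ C then k - q else k with hσ
  have hσC : ∀ k ∈ C, σ k = k + q := by intro k hk; simp [hσ, hk]
  have hσdown : ∀ k, k ∉ C → q ≤ k → k - q ∈ C → σ k = k - q := by
    intro k h1 h2 h3; simp [hσ, h1, h2, h3]
  have hσid : ∀ k, k ∉ C → ¬(q ≤ k ∧ k - q ∈ C) → σ k = k := by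
    intro k h1 h2; simp [hσ, h1, h2]
  have hinj : Function.Injective σ := by
    intro k k' h
    by_cases h1 : k ∈ C
    · rw [hσC k h1] at h
      by_cases h1' : k' ∈ C
      · rw [hσC k' h1'] at h; omega
      · by_cases h2' : q ≤ k' ∧ k' - q ∈ C
        · rw [hσdown k' h1' h2'.1 h2'.2] at h
          exact absurd (h ▸ h2'.2) (hF1 k h1)
        · rw [hσid k' h1' h2'] at h
          exact absurd ⟨by omega, by rw [← h]; simpa using h1⟩ h2'
    · by_cases h2 : q ≤ k ∧ k - q ∈ C
      · rw [hσdown k h1 h2.1 h2.2] at h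
        by_cases h1' : k' ∈ C
        · rw [hσC k' h1'] at h
          exact absurd (h ▸ h2.2) (hF1 k' h1')
        · by_cases h2' : q ≤ k' ∧ k' - q ∈ C
          · rw [hσdown k' h1' h2'.1 h2'.2] at h; omega
          · rw [hσid k' h1' h2'] at h
            exact absurd (h ▸ h2.2) h1'
      · rw [hσid k h1 h2] at h
        by_cases h1' : k' ∈ C
        · rw [hσC k' h1'] at h
          exact absurd ⟨by omega, by rw [h]; simpa using h1'⟩ h2
        · by_cases h2' : q ≤ k' ∧ k' - q ∈ C
          · rw [hσdown k' h1' h2'.1 h2'.2] at h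
            exact absurd (h ▸ h2'.2) h1
          · rw [hσid k' h1' h2'] at h; exact h
  have hmaps : Set.MapsTo σ (Set.Icc 1 (eps n)) (Set.Icc 1 (eps n)) := by
    intro k hk
    simp only [Set.mem_Icc] at hk ⊢
    by_cases h1 : k ∈ C
    · rw [hσC k h1]; have := hCbound k h1; omega
    · by_cases h2 : q ≤ k ∧ k - q ∈ C
      · rw [hσdown k h1 h2.1 h2.2]; have := hCbound _ h2.2; omega
      · rw [hσid k h1 h2]; omega
  have hbijσ : Set.BijOn σ (Set.Icc 1 (eps n)) (Set.Icc 1 (eps n)) :=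
    ((Set.finite_Icc _ _).injOn_iff_bijOn_of_mapsTo hmaps).1 hinj.injOn
  -- the new labeling
  set t' : Sym2 (Fin n) → ℕ := fun e => if e.IsDiag then t e else σ (t e) with ht'
  have ht'eq : ∀ e : Sym2 (Fin n), ¬ e.IsDiag → t' e = σ (t e) := by
    intro e he; simp [ht', he]
  have hlab' : IsEdgeLabeling n t' := by
    have hcomp : Set.BijOn (σ ∘ t) {e : Sym2 (Fin n) | ¬ e.IsDiag}
        (Set.Icc 1 (eps n)) := hbijσ.comp hl
    exact hcomp.congr fun e he => (ht'eq e he).symm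
  have hswap : IsPSwap n q t t' := by
    refine ⟨hlab', ?_⟩
    intro e he
    rw [ht'eq e he]
    by_cases h1 : t e ∈ C
    · rw [hσC _ h1, abs_le]; constructor <;> push_cast <;> omega
    · by_cases h2 : q ≤ t e ∧ t e - q ∈ C
      · rw [hσdown _ h1 h2.1 h2.2, abs_le]
        have := h2.1
        constructor <;> push_cast <;> omega
      · rw [hσid _ h1 h2, abs_le]; constructor <;> push_cast <;> omega
  -- per-edge bound at u
  have hup : ∀ e ∈ incEdges n u, (t e : ℤ) + (if t e ∈ A' then (q:ℤ) else 0) ≤ (t' e : ℤ) := by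
    intro e he
    have hnd := (mem_incEdges.1 he).2
    have hte : t e ∈ Su := Finset.mem_image.2 ⟨e, he, rfl⟩
    rw [ht'eq e hnd]
    by_cases hA : t e ∈ A'
    · rw [hσC _ (Finset.mem_union_left _ hA)]
      simp only [hA, if_true]
      push_cast; omega
    · simp only [hA, if_false, add_zero]
      by_cases h1 : t e ∈ C
      · rw [hσC _ h1]; push_cast; omega
      · by_cases h2 : q ≤ t e ∧ t e - q ∈ C
        · exfalso
          rcases hCcases _ h2.2 with hA2 | ⟨b, hb, hbe⟩
          · obtain ⟨haSu, -, i, hai, haqi⟩ := Finset.mem_filter.1 hA2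
            have haq : t e - q + q = t e := Nat.sub_add_cancel h2.1
            have := hhit' u i haSu hte hai (haq ▸ haqi)
            omega
          · obtain ⟨-, hbnSu, ⟨j, -, hqb, -⟩, -⟩ := Finset.mem_filter.1 hb
            have hbte : b = t e := by omega
            exact hbnSu (hbte ▸ hte)
        · rw [hσid _ h1 h2]
  -- per-edge bound at v
  have hdown : ∀ e ∈ incEdges n v, (t' e : ℤ) + (if t e ∈ B' then (q:ℤ) else 0) ≤ (t e : ℤ) := by
    intro e he
    have hnd := (mem_incEdges.1 he).2
    have hte : t e ∈ Sv := Finset.mem_image.2 ⟨e, he, rfl⟩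
    have hnC : t e ∉ C := by
      intro hC
      rcases hCcases _ hC with hA2 | ⟨b, hb, hbe⟩
      · exact (Finset.mem_filter.1 hA2).2.1 hte
      · obtain ⟨hbSv, -, ⟨j, hbj, hqb, hbqj⟩, -⟩ := Finset.mem_filter.1 hb
        have : t e = b := hhit' v j hte hbSv (hbe ▸ hbqj) hbj
        omega
    rw [ht'eq e hnd]
    by_cases hB : t e ∈ B'
    · obtain ⟨-, -, ⟨j, -, hqte, -⟩, -⟩ := Finset.mem_filter.1 hB
      have htq : t e - q ∈ C :=
        Finset.mem_union_right _ (Finset.mem_image.2 ⟨t e, hB, rfl⟩)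
      rw [hσdown _ hnC hqte htq]
      simp only [hB, if_true]
      push_cast [hqte]; omega
    · simp only [hB, if_false, add_zero]
      by_cases h2 : q ≤ t e ∧ t e - q ∈ C
      · rw [hσdown _ hnC h2.1 h2.2]; push_cast [h2.1]; omega
      · rw [hσid _ hnC h2]
  -- sum bounds
  have hcardA : ((incEdges n u).filter fun e => t e ∈ A').card = A'.card := by
    rw [← labelSet_filter_card hl (fun a => a ∈ A') u]
    have hAS : (labelSet n t u).filter (fun a => a ∈ A') = A' := by
      rw [Finset.filter_mem_eq_inter]
      exact Finset.inter_eq_right.2 (Finset.filter_subset _ _)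
    rw [hAS]
  have hcardB : ((incEdges n v).filter fun e => t e ∈ B').card = B'.card := by
    rw [← labelSet_filter_card hl (fun a => a ∈ B') v]
    have hBS : (labelSet n t v).filter (fun a => a ∈ B') = B' := by
      rw [Finset.filter_mem_eq_inter]
      exact Finset.inter_eq_right.2 (Finset.filter_subset _ _)
    rw [hBS]
  have hsumu : labelSum n t u + q * A'.card ≤ labelSum n t' u := by
    have h2 := Finset.sum_le_sum hup
    rw [Finset.sum_add_distrib] at h2
    have h3 : ∑ e ∈ incEdges n u, (if t e ∈ A' then (q:ℤ) else 0) = q * A'.card := by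
      rw [← Finset.sum_filter, Finset.sum_const, hcardA, nsmul_eq_mul, mul_comm]
    rw [h3] at h2
    exact h2
  have hsumv : labelSum n t' v + q * B'.card ≤ labelSum n t v := by
    have h2 := Finset.sum_le_sum hdown
    rw [Finset.sum_add_distrib] at h2
    have h3 : ∑ e ∈ incEdges n v, (if t e ∈ B' then (q:ℤ) else 0) = q * B'.card := by
      rw [← Finset.sum_filter, Finset.sum_const, hcardB, nsmul_eq_mul, mul_comm]
    rw [h3] at h2
    exact h2
  -- cardinality lower bounds
  have hAcard : n - 1 ≤ A'.card + 1 + fdef u := by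
    have hsub : Su ⊆ A' ∪ ((Su ∩ Sv) ∪
        (Su.filter fun a => ¬ ∃ i, a ∈ I i ∧ a + q ∈ I i)) := by
      intro a ha
      by_cases h1 : a ∈ Sv
      · exact Finset.mem_union_right _
          (Finset.mem_union_left _ (Finset.mem_inter.2 ⟨ha, h1⟩))
      · by_cases h2 : ∃ i, a ∈ I i ∧ a + q ∈ I i
        · exact Finset.mem_union_left _ (Finset.mem_filter.2 ⟨ha, h1, h2⟩)
        · exact Finset.mem_union_right _
            (Finset.mem_union_right _ (Finset.mem_filter.2 ⟨ha, h2⟩))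
    have h1 : Su.card ≤ A'.card + ((Su ∩ Sv).card +
        (Su.filter fun a => ¬ ∃ i, a ∈ I i ∧ a + q ∈ I i).card) := by
      calc Su.card ≤ _ := Finset.card_le_card hsub
        _ ≤ _ := le_trans (Finset.card_union_le _ _)
          (by exact Nat.add_le_add_left (Finset.card_union_le _ _) _)
    have h2 : (Su ∩ Sv).card ≤ 1 := labelSet_inter_card hl hvu.symm
    have h3 : Su.card = n - 1 := labelSet_card hl u
    have h4 : fdef u = (Su.filter fun a => ¬ ∃ i, a ∈ I i ∧ a + q ∈ I i).card := by
      simp only [hfdef, hSu]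
    omega
  have hBcard : n - 1 ≤ B'.card + 1 + gdef v := by
    have hsub : Sv ⊆ B' ∪ ((Sv ∩ Su) ∪
        ((Sv.filter fun b => ¬ ∃ i, b ∈ I i ∧ q ≤ b ∧ b - q ∈ I i) ∪
         (Sv.filter fun b => ∃ a ∈ labelSet n t u, ∃ i, a ∈ I i ∧ b ∈ I i ∧ a + 2*q = b))) := by
      intro b hb
      by_cases h1 : b ∈ Su
      · exact Finset.mem_union_right _
          (Finset.mem_union_left _ (Finset.mem_inter.2 ⟨hb, h1⟩))
      · by_cases h2 : ∃ i, b ∈ I i ∧ q ≤ b ∧ b - q ∈ I i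
        · by_cases h3 : ∃ a ∈ Su, ∃ i, a ∈ I i ∧ b ∈ I i ∧ a + 2*q = b
          · exact Finset.mem_union_right _ (Finset.mem_union_right _
              (Finset.mem_union_right _ (Finset.mem_filter.2 ⟨hb, h3⟩)))
          · exact Finset.mem_union_left _ (Finset.mem_filter.2 ⟨hb, h1, h2, h3⟩)
        · exact Finset.mem_union_right _ (Finset.mem_union_right _
            (Finset.mem_union_left _ (Finset.mem_filter.2 ⟨hb, h2⟩)))
    have h1 : Sv.card ≤ B'.card + ((Sv ∩ Su).card +
        ((Sv.filter fun b => ¬ ∃ i, b ∈ I i ∧ q ≤ b ∧ b - q ∈ I i).card +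
         (Sv.filter fun b => ∃ a ∈ labelSet n t u, ∃ i, a ∈ I i ∧ b ∈ I i ∧ a + 2*q = b).card)) := by
      calc Sv.card ≤ _ := Finset.card_le_card hsub
        _ ≤ B'.card + ((Sv ∩ Su) ∪ _).card := Finset.card_union_le _ _
        _ ≤ _ := by
          refine Nat.add_le_add_left (le_trans (Finset.card_union_le _ _) ?_) _
          exact Nat.add_le_add_left (Finset.card_union_le _ _) _
    have h2 : (Sv ∩ Su).card ≤ 1 := labelSet_inter_card hl hvu
    have h3 : Sv.card = n - 1 := labelSet_card hl v
    have h4 : gdef v = (Sv.filter fun b => ¬ ∃ i, b ∈ I i ∧ q ≤ b ∧ b - q ∈ I i).card +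
        (Sv.filter fun b => ∃ a ∈ labelSet n t u, ∃ i, a ∈ I i ∧ b ∈ I i ∧ a + 2*q = b).card := by
      simp only [hgdef, hSv, hSu]
    omega
  -- assemble
  refine ⟨t', u, v, hswap, hvu.symm, fdef u, gdef v, hu', hv', ?_⟩
  have c1 : ((n:ℤ) - 2 - fdef u) ≤ A'.card := by
    have h1 : ((n:ℤ) - 1) ≤ A'.card + 1 + fdef u := by
      have := hAcard
      omega
    linarith
  have c2 : ((n:ℤ) - 2 - gdef v) ≤ B'.card := by
    have h1 : ((n:ℤ) - 1) ≤ B'.card + 1 + gdef v := by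
      have := hBcard
      omega
    linarith
  have hq0' : (0:ℤ) ≤ q := by positivity
  have m1 := mul_le_mul_of_nonneg_left c1 hq0'
  have m2 := mul_le_mul_of_nonneg_left c2 hq0'
  linarith [hsumu, hsumv, m1, m2]


lemma sum_diff_le (n q : ℕ) {t t' : Sym2 (Fin n) → ℕ} (h : IsPSwap n q t t') (w : Fin n) :
    |labelSum n t' w - labelSum n t w| ≤ ((n - 1 : ℕ) : ℤ) * q := by
  rw [labelSum, labelSum, ← Finset.sum_sub_distrib]
  calc |∑ e ∈ incEdges n w, ((t' e : ℤ) - (t e : ℤ))|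
      ≤ ∑ e ∈ incEdges n w, |(t' e : ℤ) - (t e : ℤ)| := Finset.abs_sum_le_sum_abs _ _
    _ ≤ ∑ _e ∈ incEdges n w, (q : ℤ) :=
        Finset.sum_le_sum fun e he => h.2 e (mem_incEdges.1 he).2
    _ = ((n - 1 : ℕ) : ℤ) * q := by rw [Finset.sum_const, card_incEdges, nsmul_eq_mul]

lemma pswap_diff_le {n q a : ℕ} {t t' : Sym2 (Fin n) → ℕ} (ht : AlmostSupermagic n a t)
    (h : IsPSwap n q t t') (u v : Fin n) :
    |labelSum n t' u - labelSum n t' v| ≤ (a : ℤ) + 2 * (((n - 1 : ℕ) : ℤ) * q) := by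
  have h1 := sum_diff_le n q h u
  have h2 := sum_diff_le n q h v
  have h3 := ht.2 u v
  have h2' := abs_sub_comm (labelSum n t' v) (labelSum n t v) ▸ h2
  have hsplit : labelSum n t' u - labelSum n t' v =
      (labelSum n t' u - labelSum n t u) + (labelSum n t u - labelSum n t v) +
      (labelSum n t v - labelSum n t' v) := by ring
  rw [hsplit]
  refine le_trans (abs_add_le _ _) ?_
  refine le_trans (add_le_add_left (abs_add_le _ _) _) ?_
  linarith

lemma robustness_le {n q a : ℕ} {t : Sym2 (Fin n) → ℕ} (ht : AlmostSupermagic n a t) :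
    (robustness n q t : ℤ) ≤ (a : ℤ) + 2 * (((n - 1 : ℕ) : ℤ) * q) := by
  have hub : ∀ d ∈ {d : ℕ | ∃ t' : Sym2 (Fin n) → ℕ, IsPSwap n q t t' ∧
      ∃ u v : Fin n, u ≠ v ∧ (d : ℤ) = |labelSum n t' u - labelSum n t' v|},
      d ≤ a + 2 * ((n - 1) * q) := by
    rintro d ⟨t', hsw, u, v, huv, hd⟩
    have h1 := pswap_diff_le ht hsw u v
    rw [← hd] at h1
    have : (d : ℤ) ≤ ((a + 2 * ((n - 1) * q) : ℕ) : ℤ) := by push_cast; push_cast at h1; linarith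
    exact_mod_cast this
  have h2 : robustness n q t ≤ a + 2 * ((n - 1) * q) := csSup_le' hub
  have : ((robustness n q t : ℕ) : ℤ) ≤ ((a + 2 * ((n - 1) * q) : ℕ) : ℤ) := by exact_mod_cast h2
  push_cast at this
  linarith

lemma le_robustness {n q a : ℕ} {t t' : Sym2 (Fin n) → ℕ} (ht : AlmostSupermagic n a t)
    (h : IsPSwap n q t t') {u v : Fin n} (huv : u ≠ v) :
    labelSum n t' u - labelSum n t' v ≤ (robustness n q t : ℤ) := by
  set S := {d : ℕ | ∃ t' : Sym2 (Fin n) → ℕ, IsPSwap n q t t' ∧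
      ∃ u v : Fin n, u ≠ v ∧ (d : ℤ) = |labelSum n t' u - labelSum n t' v|} with hS
  have hmem : (labelSum n t' u - labelSum n t' v).natAbs ∈ S :=
    ⟨t', h, u, v, huv, (Int.natCast_natAbs _)⟩
  have hbdd : BddAbove S := by
    refine ⟨a + 2 * ((n - 1) * q), ?_⟩
    rintro d ⟨t'', hsw, u', v', huv', hd⟩
    have h1 := pswap_diff_le ht hsw u' v'
    rw [← hd] at h1
    have : (d : ℤ) ≤ ((a + 2 * ((n - 1) * q) : ℕ) : ℤ) := by push_cast; push_cast at h1; linarith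
    exact_mod_cast this
  have h1 : (labelSum n t' u - labelSum n t' v).natAbs ≤ robustness n q t :=
    le_csSup hbdd hmem
  calc labelSum n t' u - labelSum n t' v ≤ |labelSum n t' u - labelSum n t' v| := le_abs_self _
    _ = ((labelSum n t' u - labelSum n t' v).natAbs : ℤ) := (Int.natCast_natAbs _).symm
    _ ≤ (robustness n q t : ℤ) := by exact_mod_cast h1


lemma main_bounds (n q M a : ℕ) (t : Sym2 (Fin n) → ℕ) (hn : 2 ≤ n) (hq : 1 ≤ q)
    (ht : AlmostSupermagic n a t)
    (I : Fin M → Finset ℕ) (hAP : ∀ i, IsAP1 (I i))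
    (hdisj : (Set.univ : Set (Fin M)).PairwiseDisjoint I)
    (hcover : Finset.univ.biUnion I = Finset.Icc 1 (eps n))
    (hhit : ∀ (v : Fin n) (i : Fin M), (labelSet n t v ∩ I i).card ≤ 1) :
    ∃ f g : ℕ, n * f ≤ 2 * (M * q) ∧ (n - 1) * g ≤ 2 * (M * q) + 2 * (n - 1) ∧
      -(a : ℤ) + q * ((n : ℤ) - 2 - f) + q * ((n : ℤ) - 2 - g) ≤ (robustness n q t : ℤ) ∧
      (robustness n q t : ℤ) ≤ (a : ℤ) + 2 * (((n - 1 : ℕ) : ℤ) * q) := by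
  obtain ⟨t', u, v, hsw, huv, f, g, hf, hg, hlow⟩ :=
    key n q M t hn hq ht.1 I hAP hdisj hcover hhit
  refine ⟨f, g, hf, hg, ?_, robustness_le ht⟩
  have h1 : -(a : ℤ) ≤ labelSum n t u - labelSum n t v := by
    have := ht.2 u v
    have h2 := neg_abs_le (labelSum n t u - labelSum n t v)
    linarith
  have h3 := le_robustness ht hsw huv
  linarith

end SwapAux

theorem stmt6 (p α m : ℕ → ℕ) (hadm : Swap.Admissible p)
    (hα : ∃ C : ℝ, ∀ n : ℕ, (α n : ℝ) ≤ C * n)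
    (hm : Filter.Tendsto (fun n : ℕ => (m n : ℝ) * p n / (n : ℝ) ^ 2) Filter.atTop (nhds 0))
    (t : ∀ n : ℕ, Sym2 (Fin n) → ℕ)
    (ht : ∀ n : ℕ, 2 ≤ n → Swap.AlmostSupermagic n (α n) (t n))
    (hpart : ∀ n : ℕ, 2 ≤ n → ∃ I : Fin (m n) → Finset ℕ,
      (∀ i, Swap.IsAP1 (I i)) ∧
      (Set.univ : Set (Fin (m n))).PairwiseDisjoint I ∧
      Finset.univ.biUnion I = Finset.Icc 1 (Swap.eps n) ∧
      ∀ (v : Fin n) (i : Fin (m n)), (Swap.labelSet n (t n) v ∩ I i).card ≤ 1) :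
    Filter.limsup
      (fun n : ℕ => (Swap.robustness n (p n) (t n) : ℝ) / (2 * p n * n)) Filter.atTop = 1 := by
  obtain ⟨C, hC⟩ := hα
  have hC0 : 0 ≤ C := by
    have h1 := hC 1
    have h2 : (0:ℝ) ≤ (α 1 : ℝ) := Nat.cast_nonneg _
    have : (0:ℝ) ≤ C * 1 := by exact_mod_cast h2.trans h1
    linarith
  -- tendsto helpers
  have hP : Filter.Tendsto (fun n => (p n : ℝ)) Filter.atTop Filter.atTop :=
    tendsto_natCast_atTop_atTop.comp hadm.2
  have hCp : Filter.Tendsto (fun n : ℕ => C / (2 * p n)) Filter.atTop (nhds 0) := by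
    apply Filter.Tendsto.div_atTop tendsto_const_nhds
    exact Filter.Tendsto.const_mul_atTop (by norm_num : (0:ℝ) < 2) hP
  have h4n : Filter.Tendsto (fun n : ℕ => (4:ℝ) / n) Filter.atTop (nhds 0) :=
    tendsto_const_div_atTop_nhds_zero_nat 4
  have h3mp : Filter.Tendsto (fun n : ℕ => 3 * ((m n : ℝ) * p n / (n:ℝ)^2))
      Filter.atTop (nhds 0) := by
    simpa using hm.const_mul (3:ℝ)
  set lb : ℕ → ℝ := fun n => 1 - C / (2 * p n) - 4 / n - 3 * ((m n : ℝ) * p n / (n:ℝ)^2)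
    with hlb
  set ub : ℕ → ℝ := fun n => 1 + C / (2 * p n) with hub
  have hlbt : Filter.Tendsto lb Filter.atTop (nhds 1) := by
    have := (((tendsto_const_nhds (x := (1:ℝ))).sub hCp).sub h4n).sub h3mp
    simpa using this
  have hubt : Filter.Tendsto ub Filter.atTop (nhds 1) := by
    have := (tendsto_const_nhds (x := (1:ℝ))).add hCp
    simpa using this
  -- eventual bounds
  have hev : ∀ᶠ n : ℕ in Filter.atTop,
      lb n ≤ (Swap.robustness n (p n) (t n) : ℝ) / (2 * p n * n) ∧
      (Swap.robustness n (p n) (t n) : ℝ) / (2 * p n * n) ≤ ub n := by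
    filter_upwards [Filter.eventually_ge_atTop 2, hadm.2.eventually_ge_atTop 1]
      with n hn2 hp1
    obtain ⟨I, hAP, hdisj, hcover, hhit⟩ := hpart n hn2
    obtain ⟨f, g, hf, hg, hlow, hupp⟩ :=
      SwapAux.main_bounds n (p n) (m n) (α n) (t n) hn2 hp1 (ht n hn2) I hAP hdisj hcover hhit
    have hN2 : (2:ℝ) ≤ n := by exact_mod_cast hn2
    have hP1 : (1:ℝ) ≤ (p n : ℝ) := by exact_mod_cast hp1
    have hN0 : (0:ℝ) < n := by linarith
    have hP0 : (0:ℝ) < (p n : ℝ) := by linarith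
    have hD : (0:ℝ) < 2 * (p n : ℝ) * n := by positivity
    -- real versions of the integer bounds
    have hlowR : -(α n : ℝ) + (p n : ℝ) * ((n:ℝ) - 2 - f) + (p n : ℝ) * ((n:ℝ) - 2 - g)
        ≤ (Swap.robustness n (p n) (t n) : ℝ) := by exact_mod_cast hlow
    have huppR : (Swap.robustness n (p n) (t n) : ℝ)
        ≤ (α n : ℝ) + 2 * (((n:ℝ) - 1) * p n) := by
      have hx : ((n - 1 : ℕ) : ℝ) = (n:ℝ) - 1 := by
        have : 1 ≤ n := by omega
        push_cast [this]; ring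
      calc (Swap.robustness n (p n) (t n) : ℝ)
          ≤ (α n : ℝ) + 2 * (((n - 1 : ℕ) : ℝ) * p n) := by exact_mod_cast hupp
        _ = (α n : ℝ) + 2 * (((n:ℝ) - 1) * p n) := by rw [hx]
    have hfR : (n:ℝ) * f ≤ 2 * ((m n : ℝ) * p n) := by exact_mod_cast hf
    have hgR : ((n:ℝ) - 1) * g ≤ 2 * ((m n : ℝ) * p n) + 2 * ((n:ℝ) - 1) := by
      have hx : ((n - 1 : ℕ) : ℝ) = (n:ℝ) - 1 := by
        have : 1 ≤ n := by omega
        push_cast [this]; ring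
      calc ((n:ℝ) - 1) * g = ((n - 1 : ℕ) : ℝ) * g := by rw [hx]
        _ ≤ ((2 * (m n * p n) + 2 * (n - 1) : ℕ) : ℝ) := by exact_mod_cast hg
        _ = 2 * ((m n : ℝ) * p n) + 2 * ((n:ℝ) - 1) := by
            have : 1 ≤ n := by omega
            push_cast [this]; ring
    have hAn : (α n : ℝ) ≤ C * n := hC n
    have hA0 : (0:ℝ) ≤ (α n : ℝ) := Nat.cast_nonneg _
    have hf0 : (0:ℝ) ≤ (f:ℝ) := Nat.cast_nonneg _
    have hg0 : (0:ℝ) ≤ (g:ℝ) := Nat.cast_nonneg _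
    have hm0 : (0:ℝ) ≤ (m n : ℝ) := Nat.cast_nonneg _
    constructor
    · rw [le_div_iff₀ hD]
      have hexp : lb n * (2 * (p n : ℝ) * n)
          = 2 * (p n:ℝ) * n - C * n - 8 * p n - 6 * (m n:ℝ) * (p n:ℝ)^2 / n := by
        rw [hlb]
        field_simp
        ring
      rw [hexp]
      -- key inequality, cleared of denominators
      have hq1 : (0:ℝ) ≤ (p n:ℝ) * ((n:ℝ) - 1) := mul_nonneg hP0.le (by linarith)
      have hq2 : (0:ℝ) ≤ (p n:ℝ) * (n:ℝ) := mul_nonneg hP0.le hN0.le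
      have hq3 : (0:ℝ) ≤ (n:ℝ) * ((n:ℝ) - 1) := mul_nonneg hN0.le (by linarith)
      have T1 := mul_le_mul_of_nonneg_left hfR hq1
      have T2 := mul_le_mul_of_nonneg_left hgR hq2
      have T3 := mul_le_mul_of_nonneg_left hAn hq3
      have T4 : (0:ℝ) ≤ (m n:ℝ) * (p n:ℝ)^2 * ((n:ℝ) - 2) :=
        mul_nonneg (mul_nonneg hm0 (by positivity)) (by linarith)
      have T5 : (0:ℝ) ≤ (p n:ℝ) * (n:ℝ) * ((n:ℝ) - 1) := mul_nonneg hq2 (by linarith)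
      have hkey : ((α n : ℝ) + (p n:ℝ) * f + (p n:ℝ) * g) * ((n:ℝ) * ((n:ℝ) - 1))
          ≤ (C * n + 4 * p n) * ((n:ℝ) * ((n:ℝ) - 1)) + 6 * (m n:ℝ) * (p n:ℝ)^2 * ((n:ℝ) - 1) := by
        linarith [T1, T2, T3, T4, T5]
      have hdivkey : (α n : ℝ) + (p n:ℝ) * f + (p n:ℝ) * g
          ≤ C * n + 4 * p n + 6 * (m n:ℝ) * (p n:ℝ)^2 / n := by
        have hpos : (0:ℝ) < (n:ℝ) * ((n:ℝ) - 1) := mul_pos hN0 (by linarith)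
        rw [← mul_le_mul_iff_of_pos_right hpos]
        have h6 : (C * (n:ℝ) + 4 * p n + 6 * (m n:ℝ) * (p n:ℝ)^2 / n) * ((n:ℝ) * ((n:ℝ) - 1))
            = (C * n + 4 * p n) * ((n:ℝ) * ((n:ℝ) - 1))
              + 6 * (m n:ℝ) * (p n:ℝ)^2 * ((n:ℝ) - 1) := by
          field_simp
        rw [h6]
        exact hkey
      linarith [hlowR, hdivkey]
    · rw [div_le_iff₀ hD]
      have hexp : ub n * (2 * (p n : ℝ) * n) = 2 * (p n:ℝ) * n + C * n := by
        rw [hub]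
        field_simp
      rw [hexp]
      linarith [huppR, hAn, hP0.le]
  have htend : Filter.Tendsto
      (fun n : ℕ => (Swap.robustness n (p n) (t n) : ℝ) / (2 * p n * n))
      Filter.atTop (nhds 1) := by
    apply tendsto_of_tendsto_of_tendsto_of_le_of_le' hlbt hubt
    · exact hev.mono fun n h => h.1
    · exact hev.mono fun n h => h.2
  exact htend.limsup_eq
end

section
/- Let t be an edge labeling of K_n (n ≥ 2), p a positive integer, and F ⊆ E(K_n) a set of edges with |F| ≥ 2p such that the label set S(t,F) = {t(e) : e ∈ F} is a 1-AP (a set of consecutive integers). Then for every p-swap t′ of t, |Σ_{e∈F} t′(e) − Σ_{e∈F} t(e)| ≤ p². -/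
open Finset

open Finset

open Finset

section Helpers

variable {n : ℕ}

lemma count_image {α : Type*} [DecidableEq α] (G : Finset α) (f : α → ℕ)
    (hinj : Set.InjOn f ↑G) (P : ℕ → Prop) [DecidablePred P] :
    (G.filter fun e => P (f e)).card = ((G.image f).filter P).card := by
  rw [Finset.filter_image]
  exact (Finset.card_image_of_injOn
    (hinj.mono (Finset.coe_subset.mpr (Finset.filter_subset _ _)))).symm

lemma layer_sum {α : Type*} (F : Finset α) (u : α → ℕ) (M : ℕ)
    (hu : ∀ e ∈ F, u e ≤ M) :
    ∑ e ∈ F, (u e : ℤ) =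
      ∑ c ∈ Finset.range M, ((F.filter fun e => c < u e).card : ℤ) := by
  classical
  have h1 : ∀ e ∈ F, (u e : ℤ) =
      ∑ c ∈ Finset.range M, (if c < u e then (1 : ℤ) else 0) := by
    intro e he
    rw [Finset.sum_boole]
    congr 1
    have : (Finset.range M).filter (fun c => c < u e) = Finset.range (u e) := by
      ext x
      simp only [Finset.mem_filter, Finset.mem_range]
      have := hu e he
      omega
    rw [this, Finset.card_range]
  rw [Finset.sum_congr rfl h1, Finset.sum_comm]
  refine Finset.sum_congr rfl fun c _ => ?_
  rw [Finset.sum_boole]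

lemma gauss_sum (p : ℕ) (hp : 1 ≤ p) :
    ∑ i ∈ Finset.range (2 * p), min (i + 1) (2 * p - 1 - i) = p ^ 2 := by
  have hsplit : ∑ i ∈ Finset.Ico 0 p, min (i + 1) (2 * p - 1 - i)
      + ∑ i ∈ Finset.Ico p (2 * p), min (i + 1) (2 * p - 1 - i)
      = ∑ i ∈ Finset.Ico 0 (2 * p), min (i + 1) (2 * p - 1 - i) :=
    Finset.sum_Ico_consecutive _ (Nat.zero_le p) (by omega)
  rw [← Finset.range_eq_Ico, ← Finset.range_eq_Ico] at hsplit
  rw [← hsplit]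
  have h1 : ∑ i ∈ Finset.range p, min (i + 1) (2 * p - 1 - i)
      = (∑ i ∈ Finset.range p, i) + p := by
    have e1 : ∀ i ∈ Finset.range p, min (i + 1) (2 * p - 1 - i) = i + 1 := by
      intro i hi
      simp only [Finset.mem_range] at hi
      omega
    rw [Finset.sum_congr rfl e1, Finset.sum_add_distrib, Finset.sum_const,
      Finset.card_range, smul_eq_mul, mul_one]
  have h2 : ∑ i ∈ Finset.Ico p (2 * p), min (i + 1) (2 * p - 1 - i)
      = ∑ i ∈ Finset.range p, i := by
    rw [Finset.sum_Ico_eq_sum_range]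
    have hl : 2 * p - p = p := by omega
    rw [hl]
    have : ∀ i ∈ Finset.range p, min (p + i + 1) (2 * p - 1 - (p + i)) = p - 1 - i := by
      intro i hi
      simp only [Finset.mem_range] at hi
      omega
    rw [Finset.sum_congr rfl this]
    exact Finset.sum_range_reflect (fun x => x) p
  rw [h1, h2]
  have := Finset.sum_range_id_mul_two p
  set s := ∑ i ∈ Finset.range p, i
  obtain ⟨q, rfl⟩ : ∃ q, p = q + 1 := ⟨p - 1, by omega⟩
  have hs : s * 2 = (q + 1) * q := by simpa using this
  nlinarith [hs]

end Helpers
section Main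

open scoped Classical

lemma swap_upper (n p : ℕ) (hp : 1 ≤ p) (t t' : Sym2 (Fin n) → ℕ)
    (ht : Swap.IsEdgeLabeling n t) (ht' : Swap.IsEdgeLabeling n t')
    (hd : ∀ e : Sym2 (Fin n), ¬ e.IsDiag → |(t' e : ℤ) - (t e : ℤ)| ≤ (p : ℤ))
    (F : Finset (Sym2 (Fin n))) (hF : ∀ e ∈ F, ¬ e.IsDiag)
    (hcard : 2 * p ≤ F.card)
    (a b : ℕ) (him : F.image t = Finset.Icc a b) :
    (∑ e ∈ F, (t' e : ℤ)) - ∑ e ∈ F, (t e : ℤ) ≤ (p : ℤ) ^ 2 := by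
  set E := Swap.eps n with hE
  set D : Finset (Sym2 (Fin n)) := Finset.univ.filter (fun e => ¬ e.IsDiag) with hD
  have hFD : F ⊆ D := fun e he => Finset.mem_filter.mpr ⟨Finset.mem_univ _, hF e he⟩
  have coeD : (↑D : Set (Sym2 (Fin n))) = {e | ¬ e.IsDiag} := by
    ext e; simp [hD]
  have hinj : Set.InjOn t ↑D := by rw [coeD]; exact ht.injOn
  have hinj' : Set.InjOn t' ↑D := by rw [coeD]; exact ht'.injOn
  have hDimt : D.image t = Finset.Icc 1 E := by
    apply Finset.coe_injective
    rw [Finset.coe_image, coeD, ht.image_eq, Finset.coe_Icc]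
  have hDimt' : D.image t' = Finset.Icc 1 E := by
    apply Finset.coe_injective
    rw [Finset.coe_image, coeD, ht'.image_eq, Finset.coe_Icc]
  have hinjF : Set.InjOn t ↑F := hinj.mono (Finset.coe_subset.mpr hFD)
  have hFcard : F.card = b + 1 - a := by
    rw [← Finset.card_image_of_injOn hinjF, him, Nat.card_Icc]
  have hab : a ≤ b := by
    have hne : F.Nonempty := Finset.card_pos.mp (by omega)
    have : (Finset.Icc a b).Nonempty := him ▸ hne.image t
    exact Finset.nonempty_Icc.mp this
  have hmem : ∀ e ∈ F, 1 ≤ t e ∧ t e ≤ E := by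
    intro e he
    have := ht.mapsTo (by rw [← coeD] at *; exact hFD he)
    simpa [Set.mem_Icc] using this
  have hmem' : ∀ e ∈ F, 1 ≤ t' e ∧ t' e ≤ E := by
    intro e he
    have := ht'.mapsTo (by rw [← coeD] at *; exact hFD he)
    simpa [Set.mem_Icc] using this
  have ha1 : 1 ≤ a := by
    have : a ∈ F.image t := by rw [him]; exact Finset.mem_Icc.mpr ⟨le_refl a, hab⟩
    obtain ⟨e, he, hte⟩ := Finset.mem_image.mp this
    have := hmem e he; omega
  have hbE : b ≤ E := by
    have : b ∈ F.image t := by rw [him]; exact Finset.mem_Icc.mpr ⟨hab, le_refl b⟩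
    obtain ⟨e, he, hte⟩ := Finset.mem_image.mp this
    have := hmem e he; omega
  have hba : 2 * p ≤ b + 1 - a := hFcard ▸ hcard
  -- layer-cake rewriting
  rw [layer_sum F t' (E + p + 1) (fun e he => by have := hmem' e he; omega),
      layer_sum F t (E + p + 1) (fun e he => by have := hmem e he; omega),
      ← Finset.sum_sub_distrib]
  -- per-threshold bound
  have hper : ∀ c ∈ Finset.range (E + p + 1),
      ((F.filter fun e => c < t' e).card : ℤ) - ((F.filter fun e => c < t e).card : ℤ)
        ≤ ((min (c + p - b) (b + p - c) : ℕ) : ℤ) := by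
    intro c _
    have hH : (F.filter fun e => c < t e).card = b + 1 - max a (c + 1) := by
      rw [count_image F t hinjF (fun x => c < x), him]
      have : (Finset.Icc a b).filter (fun x => c < x) = Finset.Icc (max a (c + 1)) b := by
        ext x; simp only [Finset.mem_filter, Finset.mem_Icc]; omega
      rw [this, Nat.card_Icc]
    have hGF : (F.filter fun e => c < t' e).card ≤ b + 1 - a := by
      calc (F.filter fun e => c < t' e).card ≤ F.card := Finset.card_filter_le _ _
        _ = b + 1 - a := hFcard
    have hA : (F.filter fun e => c < t' e).card ≤ b + 1 - max a (c + 1 - p) := by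
      have hsub : (F.filter fun e => c < t' e) ⊆ F.filter (fun e => c < t e + p) := by
        intro e he
        simp only [Finset.mem_filter] at he ⊢
        refine ⟨he.1, ?_⟩
        have hde := hd e (hF e he.1)
        rw [abs_le] at hde
        have := he.2
        omega
      calc (F.filter fun e => c < t' e).card
          ≤ (F.filter fun e => c < t e + p).card := Finset.card_le_card hsub
        _ = ((Finset.Icc a b).filter fun x => c < x + p).card := by
            rw [count_image F t hinjF (fun x => c < x + p), him]
        _ = b + 1 - max a (c + 1 - p) := by
            have : (Finset.Icc a b).filter (fun x => c < x + p)
                = Finset.Icc (max a (c + 1 - p)) b := by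
              ext x; simp only [Finset.mem_filter, Finset.mem_Icc]; omega
            rw [this, Nat.card_Icc]
    have hDt : (D.filter fun e => c + p < t e).card = E + 1 - max 1 (c + p + 1) := by
      rw [count_image D t hinj (fun x => c + p < x), hDimt]
      have : (Finset.Icc 1 E).filter (fun x => c + p < x)
          = Finset.Icc (max 1 (c + p + 1)) E := by
        ext x; simp only [Finset.mem_filter, Finset.mem_Icc]; omega
      rw [this, Nat.card_Icc]
    have hFt : (F.filter fun e => c + p < t e).card = b + 1 - max a (c + p + 1) := by
      rw [count_image F t hinjF (fun x => c + p < x), him]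
      have : (Finset.Icc a b).filter (fun x => c + p < x)
          = Finset.Icc (max a (c + p + 1)) b := by
        ext x; simp only [Finset.mem_filter, Finset.mem_Icc]; omega
      rw [this, Nat.card_Icc]
    have hsplit : E + 1 - max 1 (c + p + 1)
        = (b + 1 - max a (c + p + 1)) + ((D \ F).filter fun e => c + p < t e).card := by
      rw [← hDt, ← hFt, ← Finset.card_union_of_disjoint
        (Finset.disjoint_filter_filter Finset.disjoint_sdiff),
        ← Finset.filter_union, Finset.union_sdiff_of_subset hFD]
    have hDt' : (D.filter fun e => c < t' e).card = E + 1 - max 1 (c + 1) := by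
      rw [count_image D t' hinj' (fun x => c < x), hDimt']
      have : (Finset.Icc 1 E).filter (fun x => c < x)
          = Finset.Icc (max 1 (c + 1)) E := by
        ext x; simp only [Finset.mem_filter, Finset.mem_Icc]; omega
      rw [this, Nat.card_Icc]
    have hB : (F.filter fun e => c < t' e).card + ((D \ F).filter fun e => c + p < t e).card
        ≤ E + 1 - max 1 (c + 1) := by
      rw [← hDt', ← Finset.card_union_of_disjoint]
      · apply Finset.card_le_card
        intro e he
        rcases Finset.mem_union.mp he with h1 | h1
        · simp only [Finset.mem_filter] at h1 ⊢
          exact ⟨hFD h1.1, h1.2⟩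
        · simp only [Finset.mem_filter, Finset.mem_sdiff] at h1 ⊢
          have hnd : ¬ (e : Sym2 (Fin n)).IsDiag := by
            have := h1.1.1; simp [hD] at this; exact this
          have hde := hd e hnd
          rw [abs_le] at hde
          refine ⟨h1.1.1, ?_⟩
          have := h1.2
          omega
      · exact Finset.disjoint_filter_filter Finset.disjoint_sdiff
    have hnat : (F.filter fun e => c < t' e).card
        ≤ (F.filter fun e => c < t e).card + min (c + p - b) (b + p - c) := by
      omega
    push_cast
    omega
  calc ∑ c ∈ Finset.range (E + p + 1),
        (((F.filter fun e => c < t' e).card : ℤ) - ((F.filter fun e => c < t e).card : ℤ))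
      ≤ ∑ c ∈ Finset.range (E + p + 1), ((min (c + p - b) (b + p - c) : ℕ) : ℤ) :=
        Finset.sum_le_sum hper
    _ = ((∑ c ∈ Finset.range (E + p + 1), min (c + p - b) (b + p - c) : ℕ) : ℤ) := by
        push_cast; rfl
    _ ≤ (p : ℤ) ^ 2 := by
        have hsum : ∑ c ∈ Finset.range (E + p + 1), min (c + p - b) (b + p - c) = p ^ 2 := by
          have hsub : Finset.Ioc (b - p) (b + p) ⊆ Finset.range (E + p + 1) := by
            intro c hc
            simp only [Finset.mem_Ioc] at hc
            simp only [Finset.mem_range]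
            omega
          have hzero : ∀ c ∈ Finset.range (E + p + 1), c ∉ Finset.Ioc (b - p) (b + p) →
              min (c + p - b) (b + p - c) = 0 := by
            intro c _ hc
            simp only [Finset.mem_Ioc] at hc
            omega
          rw [← Finset.sum_subset hsub hzero]
          have hIoc : Finset.Ioc (b - p) (b + p) = Finset.Ico (b - p + 1) (b + p + 1) := by
            ext x; simp only [Finset.mem_Ioc, Finset.mem_Ico]; omega
          rw [hIoc, Finset.sum_Ico_eq_sum_range]
          have hlen : b + p + 1 - (b - p + 1) = 2 * p := by omega
          rw [hlen]
          have hco : ∀ i ∈ Finset.range (2 * p),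
              min (b - p + 1 + i + p - b) (b + p - (b - p + 1 + i))
                = min (i + 1) (2 * p - 1 - i) := by
            intro i hi
            simp only [Finset.mem_range] at hi
            omega
          rw [Finset.sum_congr rfl hco]
          exact gauss_sum p hp
        rw [hsum]
        push_cast
        exact le_refl _
end Main

theorem stmt8 (n p : ℕ) (hn : 2 ≤ n) (hp : 1 ≤ p)
    (t t' : Sym2 (Fin n) → ℕ) (ht : Swap.IsEdgeLabeling n t)
    (hsw : Swap.IsPSwap n p t t')
    (F : Finset (Sym2 (Fin n))) (hF : ∀ e ∈ F, ¬ e.IsDiag)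
    (hcard : 2 * p ≤ F.card) (hAP : Swap.IsAP1 (F.image t)) :
    |(∑ e ∈ F, (t' e : ℤ)) - ∑ e ∈ F, (t e : ℤ)| ≤ (p : ℤ) ^ 2 := by
  classical
  obtain ⟨ht', hd⟩ := hsw
  obtain ⟨a, b, hab, him⟩ := hAP
  set E := Swap.eps n with hE
  have hmemt : ∀ e : Sym2 (Fin n), ¬ e.IsDiag → 1 ≤ t e ∧ t e ≤ E := by
    intro e he
    have := ht.mapsTo (show e ∈ {e : Sym2 (Fin n) | ¬ e.IsDiag} from he)
    simpa [Set.mem_Icc] using this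
  have hmemt' : ∀ e : Sym2 (Fin n), ¬ e.IsDiag → 1 ≤ t' e ∧ t' e ≤ E := by
    intro e he
    have := ht'.mapsTo (show e ∈ {e : Sym2 (Fin n) | ¬ e.IsDiag} from he)
    simpa [Set.mem_Icc] using this
  have h1 : (∑ e ∈ F, (t' e : ℤ)) - ∑ e ∈ F, (t e : ℤ) ≤ (p : ℤ) ^ 2 :=
    swap_upper n p hp t t' ht ht' hd F hF hcard a b him
  -- reflection
  have ha1 : 1 ≤ a := by
    have hne : F.Nonempty := Finset.card_pos.mp (by omega)
    obtain ⟨e, he⟩ := hne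
    have : t e ∈ Finset.Icc a b := him ▸ Finset.mem_image_of_mem t he
    have h2 := hmemt e (hF e he)
    rw [Finset.mem_Icc] at this
    -- a could still be 0 if a < 1 ≤ t e; need a itself in image
    have : a ∈ Finset.Icc a b := Finset.mem_Icc.mpr ⟨le_refl a, hab⟩
    rw [← him] at this
    obtain ⟨f, hf, hfa⟩ := Finset.mem_image.mp this
    have := hmemt f (hF f hf)
    omega
  have hbE : b ≤ E := by
    have : b ∈ Finset.Icc a b := Finset.mem_Icc.mpr ⟨hab, le_refl b⟩
    rw [← him] at this
    obtain ⟨f, hf, hfb⟩ := Finset.mem_image.mp this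
    have := hmemt f (hF f hf)
    omega
  set s : Sym2 (Fin n) → ℕ := fun e => E + 1 - t e with hs
  set s' : Sym2 (Fin n) → ℕ := fun e => E + 1 - t' e with hs'
  have refl_lab : ∀ (u : Sym2 (Fin n) → ℕ), Swap.IsEdgeLabeling n u →
      Swap.IsEdgeLabeling n (fun e => E + 1 - u e) := by
    intro u hu
    have hm : ∀ e : Sym2 (Fin n), ¬ e.IsDiag → 1 ≤ u e ∧ u e ≤ E := by
      intro e he
      have := hu.mapsTo (show e ∈ {e : Sym2 (Fin n) | ¬ e.IsDiag} from he)
      simpa [Set.mem_Icc] using this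
    refine ⟨?_, ?_, ?_⟩
    · intro e he
      have := hm e he
      simp only [Set.mem_Icc]
      omega
    · intro e he f hf hef
      have h1 := hm e he
      have h2 := hm f hf
      apply hu.injOn he hf
      simp only at hef
      omega
    · intro y hy
      simp only [Set.mem_Icc] at hy
      have : E + 1 - y ∈ Set.Icc 1 E := by simp only [Set.mem_Icc]; omega
      obtain ⟨e, he, hte⟩ := hu.surjOn this
      refine ⟨e, he, ?_⟩
      simp only
      omega
  have hts : Swap.IsEdgeLabeling n s := refl_lab t ht
  have hts' : Swap.IsEdgeLabeling n s' := refl_lab t' ht'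
  have hds : ∀ e : Sym2 (Fin n), ¬ e.IsDiag → |(s' e : ℤ) - (s e : ℤ)| ≤ (p : ℤ) := by
    intro e he
    have h1 := hmemt e he
    have h2 := hmemt' e he
    have h3 := hd e he
    rw [abs_le] at h3 ⊢
    simp only [hs, hs']
    omega
  have hims : F.image s = Finset.Icc (E + 1 - b) (E + 1 - a) := by
    have h1 : F.image s = (F.image t).image (fun x => E + 1 - x) := by
      rw [Finset.image_image]; rfl
    rw [h1, him]
    ext y
    simp only [Finset.mem_image, Finset.mem_Icc]
    constructor
    · rintro ⟨x, hx, rfl⟩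
      omega
    · intro hy
      exact ⟨E + 1 - y, by omega, by omega⟩
  have h2 : (∑ e ∈ F, (s' e : ℤ)) - ∑ e ∈ F, (s e : ℤ) ≤ (p : ℤ) ^ 2 :=
    swap_upper n p hp s s' hts hts' hds F hF hcard (E + 1 - b) (E + 1 - a) hims
  have hsum_s : ∑ e ∈ F, (s e : ℤ) = ∑ e ∈ F, (((E : ℤ) + 1) - (t e : ℤ)) := by
    refine Finset.sum_congr rfl fun e he => ?_
    have := hmemt e (hF e he)
    simp only [hs]
    push_cast [Nat.cast_sub (by omega : t e ≤ E + 1)]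
    ring
  have hsum_s' : ∑ e ∈ F, (s' e : ℤ) = ∑ e ∈ F, (((E : ℤ) + 1) - (t' e : ℤ)) := by
    refine Finset.sum_congr rfl fun e he => ?_
    have := hmemt' e (hF e he)
    simp only [hs']
    push_cast [Nat.cast_sub (by omega : t' e ≤ E + 1)]
    ring
  rw [hsum_s, hsum_s', Finset.sum_sub_distrib, Finset.sum_sub_distrib] at h2
  rw [abs_le]
  constructor
  · linarith
  · exact h1
end
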